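/- arXiv:2304.11387 — 9 statements merged into one kernel-verified Lean document; each statement's English description precedes it below -/
import Mathlib

section
/- For every integer N > 3, letting R = R(N) be the minimum of the support of the Bergman expansion of N (so that 2 − R ≥ 4), the set Nu(N) of natural base-phi expansions of N is finite and its number of elements equals TotFIB(F_{2−R} · N). -/
noncomputable section

open Finset

/-- The golden ratio φ = (1+√5)/2. -/
def goldenPhi : ℝ := (1 + Real.sqrt 5) / 2

/-- `a` is a base-phi representation of `N`: a finitely supported 0-1 digit
function on `ℤ` whose associated sum of powers of φ equals `N`. -/
def IsBasePhiRep (N : ℕ) (a : ℤ →₀ ℕ) : Prop :=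
  (∀ i, a i ≤ 1) ∧ (N : ℝ) = ∑ i ∈ a.support, (a i : ℝ) * goldenPhi ^ i

/-- `d` is the Bergman expansion of `N`: a base-phi representation with no
two consecutive digits equal to 1. -/
def IsBergman (N : ℕ) (d : ℤ →₀ ℕ) : Prop :=
  IsBasePhiRep N d ∧ ∀ i : ℤ, d i * d (i + 1) = 0

/-- The Knott condition: the expansion does not end in the digits 011, i.e.
letting `m` be the minimum of the support, not (a(m+1) = 1 and a(m+2) = 0). -/
def KnottCond (a : ℤ →₀ ℕ) : Prop :=
  ∀ m : ℤ, a.support.min = (m : WithTop ℤ) → ¬(a (m + 1) = 1 ∧ a (m + 2) = 0)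

/-- The set of base-phi representations of `N` satisfying the Knott condition. -/
def KnottSet (N : ℕ) : Set (ℤ →₀ ℕ) :=
  {a | IsBasePhiRep N a ∧ KnottCond a}

/-- `Flip a a'` : `a'` is obtained from `a` by a golden mean flip
`100 → 011` at some index `i`. -/
def Flip (a a' : ℤ →₀ ℕ) : Prop :=
  ∃ i : ℤ, a (i + 1) = 1 ∧ a i = 0 ∧ a (i - 1) = 0 ∧
    a' (i + 1) = 0 ∧ a' i = 1 ∧ a' (i - 1) = 1 ∧
    ∀ j : ℤ, j ≠ i + 1 → j ≠ i → j ≠ i - 1 → a' j = a j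

/-- The Lucas numbers: L₀ = 2, L₁ = 1, L_{n+2} = L_{n+1} + L_n. -/
def lucasNum : ℕ → ℕ
  | 0 => 2
  | 1 => 1
  | n + 2 => lucasNum (n + 1) + lucasNum n

/-- The number of representations of `M` as a sum of distinct Fibonacci
numbers `F_i` with `i ≥ 2`. -/
def TotFIB (M : ℕ) : ℕ :=
  {S : Finset ℕ | (∀ i ∈ S, 2 ≤ i) ∧ ∑ i ∈ S, Nat.fib i = M}.ncard

/-! ### Auxiliary lemmas -/

lemma phi_eq : goldenPhi = Real.goldenRatio := rfl

lemma phi_pos : 0 < goldenPhi := by rw [phi_eq]; exact Real.goldenRatio_pos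

lemma phi_ne : goldenPhi ≠ 0 := ne_of_gt phi_pos

lemma phi_sq : goldenPhi ^ 2 = goldenPhi + 1 := by rw [phi_eq]; exact Real.goldenRatio_sq

lemma irr_phi : Irrational goldenPhi := by rw [phi_eq]; exact Real.goldenRatio_irrational

lemma phi_pow (n : ℕ) (h : 1 ≤ n) :
    goldenPhi ^ n = Nat.fib n * goldenPhi + Nat.fib (n - 1) := by
  induction n with
  | zero => omega
  | succ k ih =>
    rcases Nat.eq_or_lt_of_le h with h1 | h1
    · simp [← h1]
    · have hk : 1 ≤ k := by omega
      have := ih hk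
      have hk1 : k = (k - 1) + 1 := by omega
      have hfib : (Nat.fib (k+1) : ℝ) = Nat.fib k + Nat.fib (k - 1) := by
        rw [hk1]; push_cast [Nat.fib_add_two]; ring
      calc goldenPhi ^ (k+1) = goldenPhi ^ k * goldenPhi := by ring
        _ = (Nat.fib k * goldenPhi + Nat.fib (k-1)) * goldenPhi := by rw [this]
        _ = Nat.fib k * (goldenPhi ^ 2) + Nat.fib (k-1) * goldenPhi := by ring
        _ = Nat.fib k * (goldenPhi + 1) + Nat.fib (k-1) * goldenPhi := by rw [phi_sq]
        _ = (Nat.fib (k+1) : ℝ) * goldenPhi + Nat.fib k := by rw [hfib]; ring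
        _ = Nat.fib (k+1) * goldenPhi + Nat.fib ((k+1) - 1) := by simp

lemma match_lemma (p q r s : ℕ)
    (h : (p : ℝ) * goldenPhi + q = (r : ℝ) * goldenPhi + s) : p = r ∧ q = s := by
  have hp : p = r := by
    by_contra hpr
    have hne : (p : ℝ) - r ≠ 0 := by
      intro h0
      exact hpr (by exact_mod_cast sub_eq_zero.mp h0)
    have h2 : goldenPhi = ((s : ℝ) - q) / ((p : ℝ) - r) := by
      field_simp
      linarith [h]
    have h3 : goldenPhi = ((((s : ℚ) - q) / ((p : ℚ) - r) : ℚ) : ℝ) := by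
      rw [h2]; push_cast; ring
    exact irr_phi ⟨_, h3.symm⟩
  refine ⟨hp, ?_⟩
  have : (q : ℝ) = s := by rw [hp] at h; linarith
  exact_mod_cast this

lemma pullup : ∀ (j : ℕ), 2 ≤ j → ∀ (U : Finset ℕ), (∀ m ∈ U, 2 ≤ m ∧ m ≤ j) →
    Nat.fib j ≤ ∑ m ∈ U, Nat.fib m →
    ∃ U' : Finset ℕ, (∀ m ∈ U', 2 ≤ m ∧ m ≤ j) ∧ j ∈ U' ∧
      ∑ m ∈ U', Nat.fib m = ∑ m ∈ U, Nat.fib m ∧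
      ∑ m ∈ U', Nat.fib (m-1) = ∑ m ∈ U, Nat.fib (m-1) := by
  intro j
  induction j using Nat.strong_induction_on with
  | _ j IH =>
    intro hj U hU hsum
    by_cases hjU : j ∈ U
    · exact ⟨U, hU, hjU, rfl, rfl⟩
    have hUsub : ∀ m ∈ U, 2 ≤ m ∧ m ≤ j - 1 := by
      intro m hm
      have := hU m hm
      have : m ≠ j := fun h => hjU (h ▸ hm)
      omega
    rcases Nat.lt_or_ge j 4 with hj4 | hj4
    · -- j = 2 or 3 : contradiction
      exfalso
      have hsub : U ⊆ {2} := by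
        intro m hm
        have := hUsub m hm
        have h2 : m = 2 := by omega
        simp [h2]
      have hle1 : ∑ m ∈ U, Nat.fib m ≤ ∑ m ∈ ({2} : Finset ℕ), Nat.fib m :=
        Finset.sum_le_sum_of_subset hsub
      have h21 : ∑ m ∈ ({2} : Finset ℕ), Nat.fib m = 1 := by simp
      have hfj : Nat.fib j ≤ 1 := by omega
      have hj3 : j = 2 := by
        by_contra h
        have : j = 3 := by omega
        rw [this] at hfj
        simp [Nat.fib] at hfj
      subst hj3
      have hne : U.Nonempty := by
        by_contra h
        rw [Finset.not_nonempty_iff_eq_empty.mp h] at hsum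
        simp [Nat.fib] at hsum
      obtain ⟨m, hm⟩ := hne
      have := hsub hm
      simp at this
      exact hjU (this ▸ hm)
    · -- j ≥ 4
      have h1 : Nat.fib (j-1) ≤ ∑ m ∈ U, Nat.fib m :=
        le_trans (Nat.fib_mono (by omega)) hsum
      obtain ⟨U₁, hU₁, hjU₁, hs₁, ht₁⟩ := IH (j-1) (by omega) (by omega) U hUsub h1
      set U₂ := U₁.erase (j-1) with hU₂def
      have hadd₁ : Nat.fib (j-1) + ∑ m ∈ U₂, Nat.fib m = ∑ m ∈ U₁, Nat.fib m :=
        Finset.add_sum_erase _ _ hjU₁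
      have hadd₁' : Nat.fib (j-1-1) + ∑ m ∈ U₂, Nat.fib (m-1) = ∑ m ∈ U₁, Nat.fib (m-1) :=
        Finset.add_sum_erase U₁ (fun m => Nat.fib (m-1)) hjU₁
      have hfibj : Nat.fib j = Nat.fib (j-1) + Nat.fib (j-2) := by
        have := Nat.fib_add_two (n := j-2)
        have e1 : j - 2 + 2 = j := by omega
        have e2 : j - 2 + 1 = j - 1 := by omega
        rw [e1, e2] at this
        omega
      have h2 : Nat.fib (j-2) ≤ ∑ m ∈ U₂, Nat.fib m := by omega
      have hU₂sub : ∀ m ∈ U₂, 2 ≤ m ∧ m ≤ j - 2 := by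
        intro m hm
        have hmm := hU₁ m (Finset.mem_of_mem_erase hm)
        have := Finset.ne_of_mem_erase hm
        omega
      obtain ⟨U₃, hU₃, hjU₃, hs₃, ht₃⟩ := IH (j-2) (by omega) (by omega) U₂ hU₂sub h2
      set U₄ := U₃.erase (j-2) with hU₄def
      have hadd₃ : Nat.fib (j-2) + ∑ m ∈ U₄, Nat.fib m = ∑ m ∈ U₃, Nat.fib m :=
        Finset.add_sum_erase _ _ hjU₃
      have hadd₃' : Nat.fib (j-2-1) + ∑ m ∈ U₄, Nat.fib (m-1) = ∑ m ∈ U₃, Nat.fib (m-1) :=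
        Finset.add_sum_erase U₃ (fun m => Nat.fib (m-1)) hjU₃
      have hjU₄ : j ∉ U₄ := by
        intro hm
        have := hU₃ j (Finset.mem_of_mem_erase hm)
        omega
      refine ⟨insert j U₄, ?_, Finset.mem_insert_self _ _, ?_, ?_⟩
      · intro m hm
        rcases Finset.mem_insert.mp hm with h | h
        · omega
        · have := hU₃ m (Finset.mem_of_mem_erase h)
          omega
      · rw [Finset.sum_insert hjU₄]
        omega
      · rw [Finset.sum_insert hjU₄]
        have hfibj1 : Nat.fib (j-1) = Nat.fib (j-2) + Nat.fib (j-3) := by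
          have := Nat.fib_add_two (n := j-3)
          have e1 : j - 3 + 2 = j - 1 := by omega
          have e2 : j - 3 + 1 = j - 2 := by omega
          rw [e1, e2] at this
          omega
        have e3 : j - 1 - 1 = j - 2 := by omega
        have e4 : j - 2 - 1 = j - 3 := by omega
        rw [e3] at hadd₁'
        rw [e4] at hadd₃'
        omega

lemma inv_lemma : ∀ M : ℕ, ∀ S T : Finset ℕ, (∀ m ∈ S, 2 ≤ m) → (∀ m ∈ T, 2 ≤ m) →
    ∑ m ∈ S, Nat.fib m = M → ∑ m ∈ T, Nat.fib m = M →
    ∑ m ∈ S, Nat.fib (m-1) = ∑ m ∈ T, Nat.fib (m-1) := by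
  intro M
  induction M using Nat.strong_induction_on with
  | _ M IH =>
    intro S T hS hT hSsum hTsum
    rcases Nat.eq_zero_or_pos M with hM | hM
    · have hSe : S = ∅ := by
        by_contra h
        obtain ⟨m, hm⟩ := Finset.nonempty_iff_ne_empty.mpr h
        have h1 : 0 < Nat.fib m := Nat.fib_pos.mpr (by have := hS m hm; omega)
        have h2 : Nat.fib m ≤ M := hSsum ▸ Finset.single_le_sum (fun _ _ => Nat.zero_le _) hm
        omega
      have hTe : T = ∅ := by
        by_contra h
        obtain ⟨m, hm⟩ := Finset.nonempty_iff_ne_empty.mpr h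
        have h1 : 0 < Nat.fib m := Nat.fib_pos.mpr (by have := hT m hm; omega)
        have h2 : Nat.fib m ≤ M := hTsum ▸ Finset.single_le_sum (fun _ _ => Nat.zero_le _) hm
        omega
      rw [hSe, hTe]
    · have hSne : S.Nonempty := by
        by_contra h
        rw [Finset.not_nonempty_iff_eq_empty.mp h] at hSsum
        simp at hSsum; omega
      have hTne : T.Nonempty := by
        by_contra h
        rw [Finset.not_nonempty_iff_eq_empty.mp h] at hTsum
        simp at hTsum; omega
      have hUTne : (S ∪ T).Nonempty := by
        obtain ⟨x, hx⟩ := hSne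
        exact ⟨x, Finset.mem_union_left _ hx⟩
      set j := (S ∪ T).max' hUTne with hjdef
      have hjmem : j ∈ S ∪ T := Finset.max'_mem _ _
      have hjle : ∀ m ∈ S ∪ T, m ≤ j := fun m hm => Finset.le_max' _ m hm
      have hj2 : 2 ≤ j := by
        rcases Finset.mem_union.mp hjmem with h | h
        exacts [hS j h, hT j h]
      have hfibjM : Nat.fib j ≤ M := by
        rcases Finset.mem_union.mp hjmem with h | h
        · exact hSsum ▸ Finset.single_le_sum (fun _ _ => Nat.zero_le _) h
        · exact hTsum ▸ Finset.single_le_sum (fun _ _ => Nat.zero_le _) h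
      obtain ⟨S', hS', hjS', hsS, htS⟩ := pullup j hj2 S
        (fun m hm => ⟨hS m hm, hjle m (Finset.mem_union_left _ hm)⟩) (hSsum ▸ hfibjM)
      obtain ⟨T', hT', hjT', hsT, htT⟩ := pullup j hj2 T
        (fun m hm => ⟨hT m hm, hjle m (Finset.mem_union_right _ hm)⟩) (hTsum ▸ hfibjM)
      have haddS : Nat.fib j + ∑ m ∈ S'.erase j, Nat.fib m = ∑ m ∈ S', Nat.fib m :=
        Finset.add_sum_erase S' Nat.fib hjS'
      have haddT : Nat.fib j + ∑ m ∈ T'.erase j, Nat.fib m = ∑ m ∈ T', Nat.fib m :=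
        Finset.add_sum_erase T' Nat.fib hjT'
      have haddS' : Nat.fib (j-1) + ∑ m ∈ S'.erase j, Nat.fib (m-1) = ∑ m ∈ S', Nat.fib (m-1) :=
        Finset.add_sum_erase S' (fun m => Nat.fib (m-1)) hjS'
      have haddT' : Nat.fib (j-1) + ∑ m ∈ T'.erase j, Nat.fib (m-1) = ∑ m ∈ T', Nat.fib (m-1) :=
        Finset.add_sum_erase T' (fun m => Nat.fib (m-1)) hjT'
      have hfibpos : 0 < Nat.fib j := Nat.fib_pos.mpr (by omega)
      have hM' : ∑ m ∈ S'.erase j, Nat.fib m < M := by omega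
      have heq : ∑ m ∈ T'.erase j, Nat.fib m = ∑ m ∈ S'.erase j, Nat.fib m := by omega
      have := IH (∑ m ∈ S'.erase j, Nat.fib m) hM' (S'.erase j) (T'.erase j)
        (fun m hm => (hS' m (Finset.mem_of_mem_erase hm)).1)
        (fun m hm => (hT' m (Finset.mem_of_mem_erase hm)).1)
        rfl heq
      omega

lemma key (N : ℕ) (a : ℤ →₀ ℕ) (hle : ∀ i, a i ≤ 1)
    (hsum : (N : ℝ) = ∑ i ∈ a.support, (a i : ℝ) * goldenPhi ^ i)
    (t : ℕ) (ht1 : 1 ≤ t) (ht : ∀ i ∈ a.support, 1 ≤ i + t) :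
    ∑ m ∈ a.support.image (fun i : ℤ => (i + t).toNat), Nat.fib m = Nat.fib t * N ∧
    ∑ m ∈ a.support.image (fun i : ℤ => (i + t).toNat), Nat.fib (m - 1) = Nat.fib (t-1) * N := by
  have hinj : ∀ x ∈ a.support, ∀ y ∈ a.support,
      (fun i : ℤ => (i + t).toNat) x = (fun i : ℤ => (i + t).toNat) y → x = y := by
    intro x hx y hy h
    have h1 := ht x hx
    have h2 := ht y hy
    simp only at h
    omega
  have hone : ∀ i ∈ a.support, a i = 1 := by
    intro i hi
    have := hle i
    have := Finsupp.mem_support_iff.mp hi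
    omega
  have hmain : (N : ℝ) * goldenPhi ^ t
      = ∑ m ∈ a.support.image (fun i : ℤ => (i + t).toNat), goldenPhi ^ m := by
    rw [Finset.sum_image hinj]
    rw [hsum, Finset.sum_mul]
    apply Finset.sum_congr rfl
    intro i hi
    rw [hone i hi]
    push_cast
    have h1 : (1 ≤ i + (t:ℤ)) := ht i hi
    have h2 : ((i + (t:ℤ)).toNat : ℤ) = i + t := Int.toNat_of_nonneg (by omega)
    calc (1:ℝ) * goldenPhi ^ i * goldenPhi ^ (t:ℕ)
        = goldenPhi ^ i * goldenPhi ^ (t:ℤ) := by rw [zpow_natCast]; ring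
      _ = goldenPhi ^ (i + (t:ℤ)) := (zpow_add₀ phi_ne i t).symm
      _ = goldenPhi ^ (((i + (t:ℤ)).toNat : ℤ)) := by rw [h2]
      _ = goldenPhi ^ ((i + (t:ℤ)).toNat) := zpow_natCast _ _
  have hmem1 : ∀ m ∈ a.support.image (fun i : ℤ => (i + t).toNat), 1 ≤ m := by
    intro m hm
    obtain ⟨i, hi, rfl⟩ := Finset.mem_image.mp hm
    have := ht i hi
    omega
  have hexp : ∑ m ∈ a.support.image (fun i : ℤ => (i + t).toNat), goldenPhi ^ m
      = (↑(∑ m ∈ a.support.image (fun i : ℤ => (i + t).toNat), Nat.fib m) : ℝ) * goldenPhi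
        + ↑(∑ m ∈ a.support.image (fun i : ℤ => (i + t).toNat), Nat.fib (m-1)) := by
    rw [Finset.sum_congr rfl (fun m hm => phi_pow m (hmem1 m hm))]
    rw [Finset.sum_add_distrib, ← Finset.sum_mul]
    push_cast
    ring
  have hphit : (N : ℝ) * goldenPhi ^ t
      = (↑(Nat.fib t * N) : ℝ) * goldenPhi + ↑(Nat.fib (t-1) * N) := by
    rw [phi_pow t ht1]
    push_cast
    ring
  have := match_lemma (Nat.fib t * N) (Nat.fib (t-1) * N) _ _
    (hphit.symm.trans (hmain.trans hexp))
  exact ⟨this.1.symm, this.2.symm⟩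

/-- shift the support of a 0-1 finsupp up by `c` into `ℕ`. -/
def shiftSet (c : ℕ) (a : ℤ →₀ ℕ) : Finset ℕ :=
  a.support.image (fun i : ℤ => (i + c).toNat)

/-- the 0-1 finsupp with support `S` shifted down by `c`. -/
def unshift (c : ℕ) (S : Finset ℕ) : ℤ →₀ ℕ :=
  ⟨S.image (fun m : ℕ => (m : ℤ) - c),
   fun i => if i ∈ S.image (fun m : ℕ => (m : ℤ) - c) then 1 else 0,
   by intro i; by_cases h : i ∈ S.image (fun m : ℕ => (m : ℤ) - c) <;> simp [h]⟩

lemma unshift_apply (c : ℕ) (S : Finset ℕ) (i : ℤ) :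
    unshift c S i = if i ∈ S.image (fun m : ℕ => (m : ℤ) - c) then 1 else 0 := rfl

lemma unshift_support (c : ℕ) (S : Finset ℕ) :
    (unshift c S).support = S.image (fun m : ℕ => (m : ℤ) - c) := rfl

lemma unshift_le (c : ℕ) (S : Finset ℕ) (i : ℤ) : unshift c S i ≤ 1 := by
  rw [unshift_apply]
  split <;> omega

lemma shift_unshift (c : ℕ) (S : Finset ℕ) : shiftSet c (unshift c S) = S := by
  rw [shiftSet, unshift_support, Finset.image_image]
  have : ∀ m ∈ S, ((fun i : ℤ => (i + c).toNat) ∘ (fun m : ℕ => (m : ℤ) - c)) m = id m := by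
    intro m hm
    simp only [Function.comp_apply, id_eq]
    omega
  rw [Finset.image_congr this, Finset.image_id]

lemma unshift_shift (c : ℕ) (a : ℤ →₀ ℕ) (hle : ∀ i, a i ≤ 1)
    (hsupp : ∀ i ∈ a.support, 0 ≤ i + c) : unshift c (shiftSet c a) = a := by
  have hsup : (shiftSet c a).image (fun m : ℕ => (m : ℤ) - c) = a.support := by
    rw [shiftSet, Finset.image_image]
    have : ∀ i ∈ a.support,
        ((fun m : ℕ => (m : ℤ) - c) ∘ (fun i : ℤ => (i + c).toNat)) i = id i := by
      intro i hi
      have := hsupp i hi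
      simp only [Function.comp_apply, id_eq]
      omega
    rw [Finset.image_congr this, Finset.image_id]
  ext i
  rw [unshift_apply, hsup]
  by_cases h : i ∈ a.support
  · rw [if_pos h]
    have h1 := hle i
    have h2 := Finsupp.mem_support_iff.mp h
    omega
  · rw [if_neg h]
    exact (Finsupp.notMem_support_iff.mp h).symm

lemma unshift_rep (N c : ℕ) (hc : 1 ≤ c) (S : Finset ℕ) (hS2 : ∀ m ∈ S, 2 ≤ m)
    (h1 : ∑ m ∈ S, Nat.fib m = Nat.fib c * N)
    (h2 : ∑ m ∈ S, Nat.fib (m - 1) = Nat.fib (c - 1) * N) :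
    (N : ℝ) = ∑ i ∈ (unshift c S).support, ((unshift c S) i : ℝ) * goldenPhi ^ i := by
  have hinj : ∀ x ∈ S, ∀ y ∈ S,
      (fun m : ℕ => (m : ℤ) - c) x = (fun m : ℕ => (m : ℤ) - c) y → x = y := by
    intro x hx y hy h
    simp only at h
    omega
  rw [unshift_support, Finset.sum_image hinj]
  have hterm : ∀ m ∈ S, (unshift c S ((m : ℤ) - c) : ℝ) * goldenPhi ^ ((m : ℤ) - (c : ℤ))
      = goldenPhi ^ (m : ℕ) * (goldenPhi ^ (c : ℕ))⁻¹ := by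
    intro m hm
    have hmem : ((m : ℤ) - c) ∈ S.image (fun m : ℕ => (m : ℤ) - c) :=
      Finset.mem_image_of_mem _ hm
    rw [unshift_apply, if_pos hmem]
    rw [zpow_sub₀ phi_ne, zpow_natCast, zpow_natCast]
    push_cast
    ring
  rw [Finset.sum_congr rfl hterm, ← Finset.sum_mul]
  have hsum : ∑ m ∈ S, goldenPhi ^ (m : ℕ) = (N : ℝ) * goldenPhi ^ c := by
    rw [Finset.sum_congr rfl (fun m hm => phi_pow m (by have := hS2 m hm; omega))]
    rw [Finset.sum_add_distrib, ← Finset.sum_mul]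
    have e1 : ∑ m ∈ S, (Nat.fib m : ℝ) = ((Nat.fib c * N : ℕ) : ℝ) := by
      rw [← Nat.cast_sum, h1]
    have e2 : ∑ m ∈ S, (Nat.fib (m - 1) : ℝ) = ((Nat.fib (c - 1) * N : ℕ) : ℝ) := by
      rw [← Nat.cast_sum, h2]
    rw [e1, e2, phi_pow c hc]
    push_cast
    ring
  rw [hsum]
  rw [mul_inv_cancel_right₀ (pow_ne_zero _ phi_ne)]

/-- For `N > 3`, with `R` the minimum of the support of the Bergman expansion
of `N` (so that `2 - R ≥ 4`), the number of natural base-phi expansions of `N`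
equals the number of Fibonacci representations of `F_{2-R} · N`. -/
theorem card_naturalSet_eq_totFIB (N : ℕ) (hN : 3 < N)
    (d : ℤ →₀ ℕ) (hd : IsBergman N d)
    (R : ℤ) (hR : d.support.min = (R : WithTop ℤ))
    (Nu : Set (ℤ →₀ ℕ))
    (hNu : Nu = {a | IsBasePhiRep N a ∧ ∀ i : ℤ, i < R → a i = 0}) :
    4 ≤ 2 - R ∧ Nu.Finite ∧ Nu.ncard = TotFIB (Nat.fib (2 - R).toNat * N) := by
  obtain ⟨⟨hle, hsum⟩, -⟩ := hd
  have hdsupp : ∀ i ∈ d.support, R ≤ i := by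
    intro i hi
    have h1 := Finset.min_le hi
    rw [hR] at h1
    exact_mod_cast h1
  -- Part 1 : R ≤ -2
  have hR2 : R ≤ -2 := by
    by_contra hcon
    push_neg at hcon
    obtain ⟨h1, h2⟩ := key N d hle hsum 2 (by norm_num)
      (fun i hi => by have := hdsupp i hi; omega)
    have heqs : ∑ m ∈ d.support.image (fun i : ℤ => (i + (2:ℕ)).toNat), Nat.fib (m - 1)
        = ∑ m ∈ d.support.image (fun i : ℤ => (i + (2:ℕ)).toNat), Nat.fib m := by
      rw [h1, h2]
      norm_num
    have hterm := (Finset.sum_eq_sum_iff_of_le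
      (fun m _ => Nat.fib_mono (Nat.sub_le m 1))).mp heqs
    have hsub : d.support.image (fun i : ℤ => (i + (2:ℕ)).toNat) ⊆ {2} := by
      intro m hm
      have hfm := hterm m hm
      obtain ⟨i, hi, rfl⟩ := Finset.mem_image.mp hm
      have hiR := hdsupp i hi
      set m := (i + ((2:ℕ):ℤ)).toNat with hmdef
      have hm1 : 1 ≤ m := by omega
      have hm2 : m = 2 := by
        by_contra hne
        rcases Nat.lt_or_ge m 2 with h | h
        · have : m = 1 := by omega
          rw [this] at hfm
          simp [Nat.fib] at hfm
        · have h3 : 3 ≤ m := by omega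
          have := Nat.fib_lt_fib_succ (n := m - 1) (by omega)
          have e : m - 1 + 1 = m := by omega
          rw [e] at this
          omega
      simp [hm2]
    have hleN : ∑ m ∈ d.support.image (fun i : ℤ => (i + (2:ℕ)).toNat), Nat.fib m
        ≤ ∑ m ∈ ({2} : Finset ℕ), Nat.fib m := Finset.sum_le_sum_of_subset hsub
    rw [h1] at hleN
    have h21 : ∑ m ∈ ({2} : Finset ℕ), Nat.fib m = 1 := by simp
    simp only [show Nat.fib (2 - 1) = 1 from rfl, show Nat.fib 2 = 1 from rfl,
      one_mul] at hleN
    omega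
  -- Part 2
  set c : ℕ := (2 - R).toNat with hcdef
  have hc : (c : ℤ) = 2 - R := Int.toNat_of_nonneg (by omega)
  have hc4 : 4 ≤ c := by omega
  obtain ⟨hd1, hd2⟩ := key N d hle hsum c (by omega)
    (fun i hi => by have := hdsupp i hi; omega)
  have hd1' : ∑ m ∈ shiftSet c d, Nat.fib m = Nat.fib c * N := hd1
  have hd2' : ∑ m ∈ shiftSet c d, Nat.fib (m - 1) = Nat.fib (c - 1) * N := hd2
  have hd0 : ∀ m ∈ shiftSet c d, 2 ≤ m := by
    intro m hm
    obtain ⟨i, hi, rfl⟩ := Finset.mem_image.mp hm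
    have := hdsupp i hi
    omega
  set M := Nat.fib c * N with hM
  set Tset : Set (Finset ℕ) := {S | (∀ i ∈ S, 2 ≤ i) ∧ ∑ i ∈ S, Nat.fib i = M} with hTset
  -- forward : every a ∈ Nu maps into Tset and is recovered by unshift
  have hforward : ∀ a ∈ Nu, shiftSet c a ∈ Tset ∧ unshift c (shiftSet c a) = a := by
    intro a ha
    rw [hNu] at ha
    obtain ⟨⟨hale, hasum⟩, halow⟩ := ha
    have hasupp : ∀ i ∈ a.support, R ≤ i := by
      intro i hi
      by_contra h
      exact Finsupp.mem_support_iff.mp hi (halow i (by omega))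
    obtain ⟨ha1, ha2⟩ := key N a hale hasum c (by omega)
      (fun i hi => by have := hasupp i hi; omega)
    refine ⟨⟨?_, ?_⟩, ?_⟩
    · intro m hm
      obtain ⟨i, hi, rfl⟩ := Finset.mem_image.mp hm
      have := hasupp i hi
      omega
    · exact ha1
    · exact unshift_shift c a hale (fun i hi => by have := hasupp i hi; omega)
  -- backward : every S ∈ Tset comes from Nu
  have hbackward : ∀ S ∈ Tset, unshift c S ∈ Nu ∧ shiftSet c (unshift c S) = S := by
    intro S hS
    obtain ⟨hS2, hSsum⟩ := hS
    have hSshift : ∑ m ∈ S, Nat.fib (m - 1) = Nat.fib (c - 1) * N := by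
      rw [inv_lemma M S (shiftSet c d) hS2 hd0 hSsum hd1', hd2']
    refine ⟨?_, shift_unshift c S⟩
    rw [hNu]
    refine ⟨⟨unshift_le c S, unshift_rep N c (by omega) S hS2 hSsum hSshift⟩, ?_⟩
    intro i hi
    rw [unshift_apply]
    rw [if_neg]
    intro hmem
    obtain ⟨m, hm, rfl⟩ := Finset.mem_image.mp hmem
    have := hS2 m hm
    omega
  -- conclusion
  have himg : Nu = unshift c '' Tset := by
    ext a
    constructor
    · intro ha
      exact ⟨shiftSet c a, (hforward a ha).1, (hforward a ha).2⟩
    · rintro ⟨S, hS, rfl⟩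
      exact (hbackward S hS).1
  have hinjOn : Set.InjOn (unshift c) Tset := by
    intro S hS S' hS' h
    rw [← (hbackward S hS).2, ← (hbackward S' hS').2, h]
  have hTfin : Tset.Finite := by
    apply Set.Finite.subset (Finset.finite_toSet ((Finset.range (M + 5)).powerset))
    intro S hS
    simp only [Finset.coe_powerset, Set.mem_preimage, Set.mem_powerset_iff,
      Finset.coe_subset, Finset.mem_coe, Finset.mem_powerset]
    intro m hm
    rw [Finset.mem_range]
    have hfm : Nat.fib m ≤ M := hS.2 ▸ Finset.single_le_sum (fun _ _ => Nat.zero_le _) hm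
    rcases Nat.lt_or_ge m 5 with h | h
    · omega
    · have := Nat.le_fib_self h
      omega
  refine ⟨by omega, ?_, ?_⟩
  · rw [himg]
    exact hTfin.image _
  · rw [himg, Set.ncard_image_of_injOn hinjOn]
    rfl
end
end

section
/- Let N ≥ 2 be an integer and let m < m' be the two smallest elements of the support of the Bergman expansion of N (this support has at least two elements when N ≥ 2). Then there exists n ≥ 1 with L_{2n} ≤ N ≤ L_{2n+1} if and only if m' − m is even (equivalently, the Bergman expansion ends in 1 0^s 1 with s = m' − m − 1 odd); and there exists n ≥ 0 with L_{2n+1} + 1 ≤ N ≤ L_{2n+2} − 1 if and only if m' − m is odd. -/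
noncomputable section

open Finset

namespace LucasAux

def psi : ℝ := 1 - goldenPhi


lemma sq_sqrt5 : Real.sqrt 5 ^ 2 = 5 := Real.sq_sqrt (by norm_num)

lemma phi_sq : goldenPhi ^ 2 = goldenPhi + 1 := by
  unfold goldenPhi; linear_combination sq_sqrt5 / 4

lemma one_lt_phi : 1 < goldenPhi := by
  unfold goldenPhi; nlinarith [sq_sqrt5, Real.sqrt_nonneg 5]

lemma phi_pos : 0 < goldenPhi := lt_trans one_pos one_lt_phi

lemma phi_ne : goldenPhi ≠ 0 := ne_of_gt phi_pos

lemma phi_lt_two : goldenPhi < 2 := by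
  unfold goldenPhi; nlinarith [sq_sqrt5, Real.sqrt_nonneg 5]

lemma phi_inv : goldenPhi⁻¹ = goldenPhi - 1 :=
  inv_eq_of_mul_eq_one_right (by linear_combination phi_sq)

lemma psi_eq : psi = -goldenPhi⁻¹ := by
  rw [phi_inv]; unfold psi; ring

lemma psi_sq : psi ^ 2 = psi + 1 := by
  unfold psi; linear_combination phi_sq

lemma psi_neg : psi < 0 := by unfold psi; linarith [one_lt_phi]

lemma psi_ne : psi ≠ 0 := ne_of_lt psi_neg

lemma abs_psi_lt_one : |psi| < 1 := by
  rw [abs_of_neg psi_neg]; unfold psi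
  linarith [phi_lt_two]

lemma abs_psi_zpow (i : ℤ) : |psi ^ i| = goldenPhi ^ (-i) := by
  rcases Int.even_or_odd i with h | h
  · rw [psi_eq, h.neg_zpow, inv_zpow, ← zpow_neg]
    exact abs_of_pos (zpow_pos phi_pos _)
  · rw [psi_eq, h.neg_zpow, inv_zpow, ← zpow_neg, abs_neg]
    exact abs_of_pos (zpow_pos phi_pos _)

lemma irr_phi : Irrational goldenPhi := by
  have h5 : Irrational (Real.sqrt 5) := (by norm_num : Nat.Prime 5).irrational_sqrt
  unfold goldenPhi
  rintro ⟨q, hq⟩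
  refine h5 ⟨2 * q - 1, ?_⟩
  push_cast
  linarith [hq]

lemma zpow_repr : ∀ i : ℤ, ∃ a b : ℤ,
    goldenPhi ^ i = a + b * goldenPhi ∧ psi ^ i = a + b * psi := by
  intro i
  induction i using Int.induction_on with
  | zero => exact ⟨1, 0, by simp, by simp⟩
  | succ n ih =>
    obtain ⟨a, b, h1, h2⟩ := ih
    refine ⟨b, a + b, ?_, ?_⟩
    · rw [zpow_add_one₀ phi_ne, h1]; push_cast; linear_combination (b : ℝ) * phi_sq
    · rw [zpow_add_one₀ psi_ne, h2]; push_cast; linear_combination (b : ℝ) * psi_sq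
  | pred n ih =>
    obtain ⟨a, b, h1, h2⟩ := ih
    refine ⟨b - a, a, ?_, ?_⟩
    · rw [zpow_sub_one₀ phi_ne, h1, phi_inv]; push_cast; linear_combination (b : ℝ) * phi_sq
    · have hpsiinv : psi⁻¹ = psi - 1 :=
        inv_eq_of_mul_eq_one_right (by linear_combination psi_sq)
      rw [zpow_sub_one₀ psi_ne, h2, hpsiinv]; push_cast; linear_combination (b : ℝ) * psi_sq


lemma sum_repr (s : Finset ℤ) (f : ℤ → ℕ) :
    ∃ A B : ℤ, (∑ i ∈ s, (f i : ℝ) * goldenPhi ^ i) = A + B * goldenPhi ∧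
      (∑ i ∈ s, (f i : ℝ) * psi ^ i) = A + B * psi := by
  classical
  induction s using Finset.induction_on with
  | empty => exact ⟨0, 0, by simp, by simp⟩
  | @insert x s' hx ih =>
    obtain ⟨A, B, h1, h2⟩ := ih
    obtain ⟨a, b, g1, g2⟩ := zpow_repr x
    refine ⟨(f x : ℤ) * a + A, (f x : ℤ) * b + B, ?_, ?_⟩
    · rw [Finset.sum_insert hx, h1, g1]; push_cast; ring
    · rw [Finset.sum_insert hx, h2, g2]; push_cast; ring

lemma conj_sum (N : ℕ) (d : ℤ →₀ ℕ)
    (h : (N : ℝ) = ∑ i ∈ d.support, (d i : ℝ) * goldenPhi ^ i) :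
    (N : ℝ) = ∑ i ∈ d.support, (d i : ℝ) * psi ^ i := by
  obtain ⟨A, B, h1, h2⟩ := sum_repr d.support d
  have hNA : (N : ℝ) = A + B * goldenPhi := h.trans h1
  have hB : B = 0 := by
    by_contra hB
    apply irr_phi
    refine ⟨((N : ℚ) - A) / B, ?_⟩
    push_cast
    rw [div_eq_iff (by exact_mod_cast hB)]
    linarith [hNA]
  rw [h2, hB]
  rw [hB] at hNA
  push_cast at hNA ⊢
  linarith [hNA]

lemma tail_sum_lt : ∀ (n : ℕ) (S : Finset ℤ), S.card ≤ n →
    (∀ i ∈ S, i + 1 ∉ S) → ∀ t : ℤ, (∀ i ∈ S, t ≤ i) →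
    ∑ i ∈ S, goldenPhi ^ (-i) < goldenPhi ^ (1 - t) := by
  intro n
  induction n with
  | zero =>
    intro S hcard _ t _
    rw [Finset.card_eq_zero.1 (Nat.le_zero.1 hcard)]
    simpa using zpow_pos phi_pos (1 - t)
  | succ n ih =>
    intro S hcard hcons t ht
    rcases S.eq_empty_or_nonempty with rfl | hne
    · simpa using zpow_pos phi_pos (1 - t)
    · set m0 := S.min' hne with hm0
      have hm0S : m0 ∈ S := S.min'_mem hne
      have hsplit : ∑ i ∈ S, goldenPhi ^ (-i)
          = goldenPhi ^ (-m0) + ∑ i ∈ S.erase m0, goldenPhi ^ (-i) :=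
        (Finset.add_sum_erase S _ hm0S).symm
      have htail : ∑ i ∈ S.erase m0, goldenPhi ^ (-i) < goldenPhi ^ (1 - (m0 + 2)) := by
        apply ih
        · have := Finset.card_erase_of_mem hm0S
          omega
        · intro i hi h1
          exact hcons i (Finset.mem_of_mem_erase hi) (Finset.mem_of_mem_erase h1)
        · intro i hi
          have h1 : m0 ≤ i := S.min'_le i (Finset.mem_of_mem_erase hi)
          have h2 : i ≠ m0 := Finset.ne_of_mem_erase hi
          have h3 : i ≠ m0 + 1 := by
            intro h
            exact hcons m0 hm0S (h ▸ Finset.mem_of_mem_erase hi)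
          omega
      have hfib : goldenPhi ^ (-m0) + goldenPhi ^ (1 - (m0 + 2)) = goldenPhi ^ (1 - m0) := by
        have e1 : goldenPhi ^ (1 - m0) = goldenPhi ^ (-m0) * goldenPhi := by
          rw [← zpow_add_one₀ phi_ne]; ring_nf
        have e2 : goldenPhi ^ (1 - (m0 + 2)) = goldenPhi ^ (-m0) * goldenPhi⁻¹ := by
          rw [← zpow_sub_one₀ phi_ne]; ring_nf
        rw [e1, e2, phi_inv]; ring
      have hle : goldenPhi ^ (1 - m0) ≤ goldenPhi ^ (1 - t) := by
        apply zpow_le_zpow_right₀ (le_of_lt one_lt_phi)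
        have := ht m0 hm0S
        omega
      linarith [hsplit, htail, hfib, hle]

lemma abs_tail_lt (S : Finset ℤ) (hcons : ∀ i ∈ S, i + 1 ∉ S) (t : ℤ)
    (ht : ∀ i ∈ S, t ≤ i) : |∑ i ∈ S, psi ^ i| < goldenPhi ^ (1 - t) := by
  calc |∑ i ∈ S, psi ^ i| ≤ ∑ i ∈ S, |psi ^ i| := Finset.abs_sum_le_sum_abs _ _
    _ = ∑ i ∈ S, goldenPhi ^ (-i) := Finset.sum_congr rfl fun i _ => abs_psi_zpow i
    _ < goldenPhi ^ (1 - t) := tail_sum_lt S.card S le_rfl hcons t ht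


lemma lucas_real : ∀ n : ℕ, (lucasNum n : ℝ) = goldenPhi ^ n + psi ^ n
  | 0 => by norm_num [lucasNum]
  | 1 => by
    show ((1:ℕ):ℝ) = _
    unfold psi; push_cast; ring
  | n + 2 => by
    show ((lucasNum (n+1) + lucasNum n : ℕ) : ℝ) = _
    push_cast
    rw [lucas_real (n+1), lucas_real n]
    linear_combination (-(goldenPhi ^ n)) * phi_sq + (-(psi ^ n)) * psi_sq

lemma lucas_pos : ∀ n : ℕ, 1 ≤ lucasNum n
  | 0 => by norm_num [lucasNum]
  | 1 => le_rfl
  | n + 2 => by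
    have h1 := lucas_pos (n + 1)
    show 1 ≤ lucasNum (n+1) + lucasNum n
    omega

lemma lucas_le_succ : ∀ n : ℕ, 1 ≤ n → lucasNum n ≤ lucasNum (n + 1) := by
  rintro (_ | k) h
  · omega
  · show lucasNum (k+1) ≤ lucasNum (k+1) + lucasNum k
    exact Nat.le_add_right _ _

lemma lucas_mono {a b : ℕ} (ha : 1 ≤ a) (hab : a ≤ b) : lucasNum a ≤ lucasNum b := by
  induction hab with
  | refl => exact le_rfl
  | @step b' hb' ih => exact le_trans ih (lucas_le_succ b' (le_trans ha hb'))

lemma psi_sq_pos : (0:ℝ) < psi ^ 2 ∧ psi ^ 2 < 1 := by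
  constructor
  · have h := psi_ne
    positivity
  · rw [psi_sq]; unfold psi; linarith [one_lt_phi]

lemma even_pow_psi (k : ℕ) (hk : 1 ≤ k) : 0 < psi ^ (2 * k) ∧ psi ^ (2 * k) < 1 := by
  have h := psi_sq_pos
  rw [pow_mul]
  exact ⟨pow_pos h.1 k, pow_lt_one₀ h.1.le h.2 (by omega)⟩

lemma odd_pow_psi (j : ℕ) : psi ^ (2 * j + 1) < 0 ∧ -1 < psi ^ (2 * j + 1) := by
  constructor
  · exact Odd.pow_neg ⟨j, by ring⟩ psi_neg
  · have h : |psi ^ (2 * j + 1)| < 1 := by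
      rw [abs_pow]
      exact pow_lt_one₀ (abs_nonneg _) abs_psi_lt_one (by omega)
    linarith [(abs_lt.1 h).1]

lemma even_interval (k : ℕ) (hk : 1 ≤ k) :
    (lucasNum (2 * k) : ℝ) - 1 < goldenPhi ^ (2 * k) ∧
      goldenPhi ^ (2 * k) < (lucasNum (2 * k) : ℝ) := by
  have h := lucas_real (2 * k)
  have h2 := even_pow_psi k hk
  constructor <;> linarith [h2.1, h2.2]

lemma odd_interval (j : ℕ) :
    (lucasNum (2 * j + 1) : ℝ) < goldenPhi ^ (2 * j + 1) ∧
      goldenPhi ^ (2 * j + 1) < (lucasNum (2 * j + 1) : ℝ) + 1 := by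
  have h := lucas_real (2 * j + 1)
  have h2 := odd_pow_psi j
  constructor <;> linarith [h2.1, h2.2]

lemma hfib (t : ℤ) : goldenPhi ^ (t + 1) = goldenPhi ^ t + goldenPhi ^ (t - 1) := by
  rw [zpow_add_one₀ phi_ne, zpow_sub_one₀ phi_ne, phi_inv]; ring


lemma core (N : ℕ) (hN : 2 ≤ N)
    (d : ℤ →₀ ℕ) (hd : IsBergman N d)
    (m m' : ℤ) (hm : m ∈ d.support) (hm' : m' ∈ d.support) (hlt : m < m')
    (hmin : ∀ j ∈ d.support, m ≤ j)
    (hmin' : ∀ j ∈ d.support, j ≠ m → m' ≤ j) :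
    (Even (m' - m) → ∃ n : ℕ, 1 ≤ n ∧ lucasNum (2 * n) ≤ N ∧ N ≤ lucasNum (2 * n + 1)) ∧
    (Odd (m' - m) → ∃ n : ℕ, lucasNum (2 * n + 1) + 1 ≤ N ∧ N ≤ lucasNum (2 * n + 2) - 1) := by
  classical
  obtain ⟨⟨hle, hsum⟩, hcons⟩ := hd
  have hone : ∀ i ∈ d.support, (d i : ℝ) = 1 := by
    intro i hi
    have h1 := hle i
    have h2 : d i ≠ 0 := Finsupp.mem_support_iff.1 hi
    have h3 : d i = 1 := by omega
    rw [h3]; norm_num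
  have hpsisum : (N : ℝ) = ∑ i ∈ d.support, psi ^ i := by
    rw [conj_sum N d hsum]
    exact Finset.sum_congr rfl fun i hi => by rw [hone i hi, one_mul]
  have hnotS : ∀ i ∈ d.support, i + 1 ∉ d.support := by
    intro i hi h1
    have h0 := hcons i
    have h2 : d i ≠ 0 := Finsupp.mem_support_iff.1 hi
    have h3 : d (i + 1) ≠ 0 := Finsupp.mem_support_iff.1 h1
    rcases Nat.mul_eq_zero.1 h0 with h | h
    · exact h2 h
    · exact h3 h
  have hm2 : m + 2 ≤ m' := by
    by_contra h
    push_neg at h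
    have he : m' = m + 1 := by omega
    exact hnotS m hm (he ▸ hm')
  have hN2 : (2 : ℝ) ≤ (N : ℝ) := by exact_mod_cast hN
  -- m ≤ -1
  have hmne : m ≤ -1 := by
    by_contra h
    push_neg at h
    have hb := abs_tail_lt d.support hnotS m hmin
    rw [← hpsisum] at hb
    have h2 : goldenPhi ^ ((1 : ℤ) - m) ≤ goldenPhi ^ (1 : ℤ) :=
      zpow_le_zpow_right₀ one_lt_phi.le (by omega)
    rw [zpow_one] at h2
    have h3 : |(N : ℝ)| = N := abs_of_nonneg (Nat.cast_nonneg N)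
    linarith [phi_lt_two]
  -- erase m bounds
  have heraseSub : ∀ i ∈ d.support.erase m, m + 2 ≤ i := by
    intro i hi
    have h1 := hmin' i (Finset.mem_of_mem_erase hi) (Finset.ne_of_mem_erase hi)
    omega
  have heraseCons : ∀ i ∈ d.support.erase m, i + 1 ∉ d.support.erase m := fun i hi h =>
    hnotS i (Finset.mem_of_mem_erase hi) (Finset.mem_of_mem_erase h)
  have hsplit1 : (N : ℝ) = psi ^ m + ∑ i ∈ d.support.erase m, psi ^ i := by
    rw [hpsisum, ← Finset.add_sum_erase _ _ hm]
  have htail1 : |∑ i ∈ d.support.erase m, psi ^ i| < goldenPhi ^ (-m - 1) := by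
    have h := abs_tail_lt _ heraseCons (m + 2) heraseSub
    rwa [show (1 : ℤ) - (m + 2) = -m - 1 by ring] at h
  -- m is even
  have hmeven : Even m := by
    by_contra hodd
    rw [Int.not_even_iff_odd] at hodd
    have hpsim : psi ^ m = -goldenPhi ^ (-m) := by
      rw [psi_eq, hodd.neg_zpow, inv_zpow, ← zpow_neg]
    have hlt' : goldenPhi ^ (-m - 1) < goldenPhi ^ (-m) :=
      zpow_lt_zpow_right₀ one_lt_phi (by omega)
    have habs := (abs_lt.1 htail1).2
    rw [hpsim] at hsplit1
    linarith
  -- extract k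
  have hme := hmeven
  obtain ⟨r, hr⟩ := hmeven
  have hrneg : r ≤ -1 := by omega
  have hkr : ((-r).toNat : ℤ) = -r := Int.toNat_of_nonneg (by omega)
  set k : ℕ := (-r).toNat with hkdef
  have hk1 : 1 ≤ k := by omega
  have hmk : m = -(2 * (k : ℤ)) := by omega
  -- second split
  have hm'erase : m' ∈ d.support.erase m := Finset.mem_erase.2 ⟨by omega, hm'⟩
  have hT'lb : ∀ i ∈ (d.support.erase m).erase m', m' + 2 ≤ i := by
    intro i hi
    have h1 : i ∈ d.support := Finset.mem_of_mem_erase (Finset.mem_of_mem_erase hi)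
    have h2 : i ≠ m' := Finset.ne_of_mem_erase hi
    have h3 : i ≠ m := Finset.ne_of_mem_erase (Finset.mem_of_mem_erase hi)
    have h4 := hmin' i h1 h3
    have h5 : i ≠ m' + 1 := fun h => hnotS m' hm' (h ▸ h1)
    omega
  have hT'cons : ∀ i ∈ (d.support.erase m).erase m',
      i + 1 ∉ (d.support.erase m).erase m' := fun i hi h =>
    hnotS i (Finset.mem_of_mem_erase (Finset.mem_of_mem_erase hi))
      (Finset.mem_of_mem_erase (Finset.mem_of_mem_erase h))
  have hsplit2 : (N : ℝ) = psi ^ m + psi ^ m'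
      + ∑ i ∈ (d.support.erase m).erase m', psi ^ i := by
    rw [hsplit1, ← Finset.add_sum_erase _ _ hm'erase]
    ring
  have htail2 : |∑ i ∈ (d.support.erase m).erase m', psi ^ i|
      < goldenPhi ^ (-m' - 1) := by
    have h := abs_tail_lt _ hT'cons (m' + 2) hT'lb
    rwa [show (1 : ℤ) - (m' + 2) = -m' - 1 by ring] at h
  have hpsimE : psi ^ m = goldenPhi ^ (-m) := by
    rw [psi_eq, hme.neg_zpow, inv_zpow, ← zpow_neg]
  have habs2 := abs_lt.1 htail2
  -- nat-pow conversions
  have hzpE : goldenPhi ^ (-m) = goldenPhi ^ (2 * k : ℕ) := by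
    rw [show -m = ((2 * k : ℕ) : ℤ) by push_cast; omega, zpow_natCast]
  have hzpE1 : goldenPhi ^ (-m + 1) = goldenPhi ^ (2 * k + 1 : ℕ) := by
    rw [show -m + 1 = ((2 * k + 1 : ℕ) : ℤ) by push_cast; omega, zpow_natCast]
  have hzpO : goldenPhi ^ (-m - 1) = goldenPhi ^ (2 * (k - 1) + 1 : ℕ) := by
    rw [show -m - 1 = ((2 * (k - 1) + 1 : ℕ) : ℤ) by push_cast; omega, zpow_natCast]
  constructor
  · -- even case
    intro hEv
    have hm'even : Even m' := by
      have h := hEv.add hme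
      rwa [sub_add_cancel] at h
    have hpsim' : psi ^ m' = goldenPhi ^ (-m') := by
      rw [psi_eq, hm'even.neg_zpow, inv_zpow, ← zpow_neg]
    rw [hpsimE, hpsim'] at hsplit2
    -- lower bound : N > φ^(-m)
    have e5 : goldenPhi ^ (-m' - 1) < goldenPhi ^ (-m') :=
      zpow_lt_zpow_right₀ one_lt_phi (by omega)
    have hlow : goldenPhi ^ (-m) < (N : ℝ) := by linarith [habs2.1]
    -- upper bound : N < φ^(-m+1)
    have e1 := hfib (-m')
    have e2 := hfib (-m)
    have e3 : goldenPhi ^ (-m' + 1) ≤ goldenPhi ^ (-m - 1) :=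
      zpow_le_zpow_right₀ one_lt_phi.le (by omega)
    have hup : (N : ℝ) < goldenPhi ^ (-m + 1) := by linarith [habs2.2]
    rw [hzpE] at hlow
    rw [hzpE1] at hup
    refine ⟨k, hk1, ?_, ?_⟩
    · have h := (even_interval k hk1).1
      have : (lucasNum (2 * k) : ℝ) < (N : ℝ) + 1 := by linarith
      exact_mod_cast Nat.lt_add_one_iff.1 (by exact_mod_cast this)
    · have h := (odd_interval k).2
      have : (N : ℝ) < (lucasNum (2 * k + 1) : ℝ) + 1 := by linarith
      exact_mod_cast Nat.lt_add_one_iff.1 (by exact_mod_cast this)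
  · -- odd case
    intro hOdd
    have hm'odd : Odd m' := by
      have h := hOdd.add_even hme
      rwa [sub_add_cancel] at h
    have hm3 : m + 3 ≤ m' := by
      obtain ⟨s, hs⟩ := hOdd
      omega
    have hpsim' : psi ^ m' = -goldenPhi ^ (-m') := by
      rw [psi_eq, hm'odd.neg_zpow, inv_zpow, ← zpow_neg]
    rw [hpsimE, hpsim'] at hsplit2
    -- upper bound : N < φ^(-m)
    have e1 := hfib (-m' - 1)
    have e1' : goldenPhi ^ (-m' - 1 + 1) = goldenPhi ^ (-m') := by
      rw [show -m' - 1 + 1 = -m' from by ring]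
    have hup : (N : ℝ) < goldenPhi ^ (-m) := by
      have h0 : (0:ℝ) < goldenPhi ^ (-m' - 1 - 1) := zpow_pos phi_pos _
      linarith [habs2.2]
    -- lower bound : N > φ^(-m-1)
    have e2 := hfib (-m - 1)
    have e2' : goldenPhi ^ (-m - 1 + 1) = goldenPhi ^ (-m) := by
      rw [show -m - 1 + 1 = -m from by ring]
    have e3 := hfib (-m')
    have e4 : goldenPhi ^ (-m' + 1) ≤ goldenPhi ^ (-m - 1 - 1) :=
      zpow_le_zpow_right₀ one_lt_phi.le (by omega)
    have hlow : goldenPhi ^ (-m - 1) < (N : ℝ) := by linarith [habs2.1]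
    rw [hzpE] at hup
    rw [hzpO] at hlow
    refine ⟨k - 1, ?_, ?_⟩
    · have h := (odd_interval (k - 1)).1
      have : (lucasNum (2 * (k - 1) + 1) : ℝ) < (N : ℝ) := by linarith
      have h2 : lucasNum (2 * (k - 1) + 1) < N := by exact_mod_cast this
      omega
    · have h := (even_interval k hk1).2
      have : (N : ℝ) < (lucasNum (2 * k) : ℝ) := by linarith
      have h2 : N < lucasNum (2 * k) := by exact_mod_cast this
      have h3 : 2 * (k - 1) + 2 = 2 * k := by omega
      rw [h3]
      omega

end LucasAux

/-- For `N ≥ 2` with `m < m'` the two smallest elements of the support of the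
Bergman expansion of `N`: `N` lies in an even Lucas interval `[L_{2n}, L_{2n+1}]`
(`n ≥ 1`) iff `m' - m` is even (i.e. the expansion ends in `1 0^s 1` with
`s = m' - m - 1` odd), and `N` lies in an odd Lucas interval
`[L_{2n+1}+1, L_{2n+2}-1]` iff `m' - m` is odd. -/
theorem lucas_interval_parity (N : ℕ) (hN : 2 ≤ N)
    (d : ℤ →₀ ℕ) (hd : IsBergman N d)
    (m m' : ℤ) (hm : m ∈ d.support) (hm' : m' ∈ d.support) (hlt : m < m')
    (hmin : ∀ j ∈ d.support, m ≤ j)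
    (hmin' : ∀ j ∈ d.support, j ≠ m → m' ≤ j) :
    ((∃ n : ℕ, 1 ≤ n ∧ lucasNum (2 * n) ≤ N ∧ N ≤ lucasNum (2 * n + 1)) ↔
      Even (m' - m)) ∧
    ((∃ n : ℕ, lucasNum (2 * n + 1) + 1 ≤ N ∧ N ≤ lucasNum (2 * n + 2) - 1) ↔
      Odd (m' - m)) := by
  have hcore := LucasAux.core N hN d hd m m' hm hm' hlt hmin hmin'
  have hdisj : ∀ (n j : ℕ), 1 ≤ n → lucasNum (2*n) ≤ N → N ≤ lucasNum (2*n+1) →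
      lucasNum (2*j+1) + 1 ≤ N → N ≤ lucasNum (2*j+2) - 1 → False := by
    intro n j hn h1 h2 h3 h4
    rcases le_or_gt (2*n+1) (2*j+1) with h | h
    · have := LucasAux.lucas_mono (by omega : 1 ≤ 2*n+1) h
      omega
    · have h5 := LucasAux.lucas_mono (by omega : 1 ≤ 2*j+2) (by omega : 2*j+2 ≤ 2*n)
      have h6 := LucasAux.lucas_pos (2*j+2)
      omega
  constructor
  · constructor
    · intro hP
      by_contra h
      rw [Int.not_even_iff_odd] at h
      obtain ⟨j, h3, h4⟩ := hcore.2 h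
      obtain ⟨n, hn, h1, h2⟩ := hP
      exact hdisj n j hn h1 h2 h3 h4
    · exact hcore.1
  · constructor
    · intro hP
      by_contra h
      rw [Int.not_odd_iff_even] at h
      obtain ⟨n, hn, h1, h2⟩ := hcore.1 h
      obtain ⟨j, h3, h4⟩ := hP
      exact hdisj n j hn h1 h2 h3 h4
    · exact hcore.2
end
end

section
/- Let N be a positive integer and let R(N) be the minimum of the support of the Bergman expansion of N. If n ≥ 1 and L_{2n} ≤ N ≤ L_{2n+1}, then R(N) = −2n; and if n ≥ 0 and L_{2n+1} + 1 ≤ N ≤ L_{2n+2} − 1, then R(N) = −(2n+2). -/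
noncomputable section

open Finset

section BergmanAux

local notation "φ" => Real.goldenRatio
local notation "ψ" => Real.goldenConj

private lemma gold_mul_self : φ * φ = φ + 1 := by have := Real.goldenRatio_sq; rwa [sq] at this
private lemma goldConj_mul_self : ψ * ψ = ψ + 1 := by
  have := Real.goldenConj_sq; rwa [sq] at this

private lemma psi_eq_neg_inv : ψ = -(φ⁻¹) := by rw [Real.inv_goldenRatio]; ring

private lemma psi_zpow_even {i : ℤ} (h : Even i) : ψ ^ i = (φ ^ i)⁻¹ := by
  rw [psi_eq_neg_inv, h.neg_zpow, inv_zpow]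

private lemma psi_zpow_odd {i : ℤ} (h : Odd i) : ψ ^ i = -(φ ^ i)⁻¹ := by
  rw [psi_eq_neg_inv, h.neg_zpow, inv_zpow]

private lemma gold_zpow_pos (i : ℤ) : 0 < φ ^ i := zpow_pos Real.goldenRatio_pos i

private lemma gold_zpow_fib (i : ℤ) : φ ^ (i + 2) = φ ^ (i + 1) + φ ^ i := by
  have h1 : φ ^ (i + 2) = φ ^ i * (φ * φ) := by
    rw [show i + 2 = i + 1 + 1 by ring, zpow_add_one₀ Real.goldenRatio_ne_zero,
      zpow_add_one₀ Real.goldenRatio_ne_zero]; ring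
  have h2 : φ ^ (i + 1) = φ ^ i * φ := zpow_add_one₀ Real.goldenRatio_ne_zero i
  rw [h1, h2, gold_mul_self]; ring

private lemma gold_inv_eq : φ⁻¹ = φ - 1 := by rw [Real.inv_goldenRatio, ← Real.one_sub_goldenConj]; ring
private lemma goldConj_inv_eq : ψ⁻¹ = ψ - 1 := by
  rw [Real.inv_goldenConj]
  have := Real.goldenRatio_add_goldenConj; linarith

private lemma exists_rep (i : ℤ) :
    ∃ a b : ℤ, φ ^ i = (a : ℝ) + b * φ ∧ ψ ^ i = (a : ℝ) + b * ψ := by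
  induction i using Int.induction_on with
  | zero => exact ⟨1, 0, by norm_num, by norm_num⟩
  | succ n ih =>
    obtain ⟨a, b, h1, h2⟩ := ih
    refine ⟨b, a + b, ?_, ?_⟩
    · rw [zpow_add_one₀ Real.goldenRatio_ne_zero, h1]
      push_cast
      linear_combination (b : ℝ) * gold_mul_self
    · rw [zpow_add_one₀ Real.goldenConj_ne_zero, h2]
      push_cast
      linear_combination (b : ℝ) * goldConj_mul_self
  | pred n ih =>
    obtain ⟨a, b, h1, h2⟩ := ih
    refine ⟨b - a, a, ?_, ?_⟩
    · rw [show (-(n:ℤ) - 1) = (-(n:ℤ)) - 1 by ring, zpow_sub_one₀ Real.goldenRatio_ne_zero, h1,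
        gold_inv_eq]
      push_cast
      linear_combination (b : ℝ) * gold_mul_self
    · rw [show (-(n:ℤ) - 1) = (-(n:ℤ)) - 1 by ring, zpow_sub_one₀ Real.goldenConj_ne_zero, h2,
        goldConj_inv_eq]
      push_cast
      linear_combination (b : ℝ) * goldConj_mul_self

private lemma rep_sum (s : Finset ℤ) (c : ℤ → ℤ) :
    ∃ A B : ℤ, ∑ i ∈ s, (c i : ℝ) * φ ^ i = (A : ℝ) + B * φ ∧
      ∑ i ∈ s, (c i : ℝ) * ψ ^ i = (A : ℝ) + B * ψ := by
  classical
  induction s using Finset.cons_induction with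
  | empty => exact ⟨0, 0, by simp, by simp⟩
  | cons a s ha ih =>
    obtain ⟨A, B, h1, h2⟩ := ih
    obtain ⟨p, q, hp, hq⟩ := exists_rep a
    refine ⟨c a * p + A, c a * q + B, ?_, ?_⟩ <;>
      rw [Finset.sum_cons]
    · rw [h1, hp]; push_cast; ring
    · rw [h2, hq]; push_cast; ring

private lemma conj_sum {s : Finset ℤ} {c : ℤ → ℤ} {z : ℤ}
    (h : ∑ i ∈ s, (c i : ℝ) * φ ^ i = (z : ℝ)) :
    ∑ i ∈ s, (c i : ℝ) * ψ ^ i = (z : ℝ) := by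
  obtain ⟨A, B, h1, h2⟩ := rep_sum s c
  have hB : B = 0 := by
    by_contra hB
    apply Real.goldenRatio_irrational
    have hBR : (B : ℝ) ≠ 0 := Int.cast_ne_zero.mpr hB
    refine ⟨((z - A : ℤ) : ℚ) / ((B : ℤ) : ℚ), ?_⟩
    rw [h1] at h
    push_cast
    rw [div_eq_iff hBR]
    linarith
  rw [hB] at h1 h2
  rw [h1] at h
  rw [h2]
  push_cast at h ⊢
  linarith

private lemma sum_phi_inv_lt (s : Finset ℤ) (a : ℤ)
    (hs : ∀ i ∈ s, a ≤ i ∧ Even (i - a)) :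
    ∑ i ∈ s, (φ ^ i)⁻¹ < φ ^ (1 - a) := by
  classical
  set n : ℕ := s.sup (fun i => (i - a).toNat) + 1 with hn
  have hsub : s ⊆ (Finset.range n).image (fun j : ℕ => a + 2 * (j : ℤ)) := by
    intro i hi
    obtain ⟨hai, r, hr⟩ := hs i hi
    refine Finset.mem_image.mpr ⟨r.toNat, Finset.mem_range.mpr ?_, ?_⟩
    · have h1 : (i - a).toNat ≤ s.sup (fun i => (i - a).toNat) :=
        Finset.le_sup (f := fun i => (i - a).toNat) hi
      omega
    · omega
  have h1 : ∑ i ∈ s, (φ ^ i)⁻¹ ≤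
      ∑ i ∈ (Finset.range n).image (fun j : ℕ => a + 2 * (j : ℤ)), (φ ^ i)⁻¹ := by
    apply Finset.sum_le_sum_of_subset_of_nonneg hsub
    intro i _ _
    exact (inv_pos.mpr (gold_zpow_pos i)).le
  have hinj : ∀ x ∈ Finset.range n, ∀ y ∈ Finset.range n,
      a + 2 * (x : ℤ) = a + 2 * (y : ℤ) → x = y := by intro x _ y _ h; omega
  rw [Finset.sum_image hinj] at h1
  obtain ⟨r, hrdef⟩ : ∃ r : ℝ, r = (φ * φ)⁻¹ := ⟨_, rfl⟩
  have hgg : (1:ℝ) < φ * φ := by nlinarith [Real.one_lt_goldenRatio]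
  have hr0 : 0 < r := by rw [hrdef]; positivity
  have hr1 : r < 1 := by
    rw [hrdef, inv_lt_one₀ (by linarith)]; exact hgg
  have hterm : ∀ j : ℕ, (φ ^ (a + 2 * (j : ℤ)))⁻¹ = (φ ^ a)⁻¹ * r ^ j := by
    intro j
    rw [zpow_add₀ Real.goldenRatio_ne_zero, mul_inv, hrdef]
    congr 1
    rw [show (2 * (j:ℤ)) = (2:ℤ) * (j:ℕ) by ring, zpow_mul, zpow_natCast,
      ← inv_pow]
    congr 1
    congr 1
    rw [show (2:ℤ) = 1 + 1 by norm_num, zpow_add_one₀ Real.goldenRatio_ne_zero, zpow_one]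
  have hgeom : ∑ j ∈ Finset.range n, r ^ j < (1 - r)⁻¹ := by
    clear hrdef hterm
    have hne : r ≠ 1 := ne_of_lt hr1
    rw [geom_sum_eq hne]
    have hrn : 0 < r ^ n := pow_pos hr0 n
    have hd : (r ^ n - 1) / (r - 1) = (1 - r ^ n) / (1 - r) := by
      rw [div_eq_div_iff (by linarith) (by linarith)]; ring
    rw [hd, div_lt_iff₀ (by linarith), inv_mul_cancel₀ (by linarith)]
    linarith
  have hsum2 : ∑ j ∈ Finset.range n, (φ ^ (a + 2 * (j : ℤ)))⁻¹
      < (φ ^ a)⁻¹ * (1 - r)⁻¹ := by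
    calc ∑ j ∈ Finset.range n, (φ ^ (a + 2 * (j : ℤ)))⁻¹
        = (φ ^ a)⁻¹ * ∑ j ∈ Finset.range n, r ^ j := by
          rw [Finset.mul_sum]; exact Finset.sum_congr rfl fun j _ => hterm j
      _ < (φ ^ a)⁻¹ * (1 - r)⁻¹ :=
          mul_lt_mul_of_pos_left hgeom (inv_pos.mpr (gold_zpow_pos a))
  have hkey : (φ ^ a)⁻¹ * (1 - r)⁻¹ = φ ^ (1 - a) := by
    have s5 : Real.sqrt 5 ^ 2 = 5 := Real.sq_sqrt (by norm_num)
    have h5 : (1 : ℝ) - r = φ⁻¹ := by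
      rw [hrdef]
      have hφ : (0:ℝ) < φ := Real.goldenRatio_pos
      field_simp
      nlinarith [s5, Real.sqrt_nonneg 5]
    rw [h5, inv_inv, show (1 - a) = 1 + (-a) by ring, zpow_add₀ Real.goldenRatio_ne_zero, zpow_one,
      zpow_neg]
    ring
  rw [hkey] at hsum2
  linarith

private lemma sum_psi_le_bound (s : Finset ℤ) (c : ℤ → ℝ) (h0 : ∀ i, 0 ≤ c i)
    (h1 : ∀ i, c i ≤ 1) {a : ℤ} (ha : Even a) (hs : ∀ i ∈ s, Even i → a ≤ i) :
    ∑ i ∈ s, c i * ψ ^ i < φ ^ (1 - a) := by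
  classical
  have hsplit := Finset.sum_filter_add_sum_filter_not s (fun i => Even i)
    (fun i => c i * ψ ^ i)
  have hodd : ∑ i ∈ s.filter (fun i => ¬ Even i), c i * ψ ^ i ≤ 0 := by
    apply Finset.sum_nonpos
    intro i hi
    have hoi : Odd i := Int.not_even_iff_odd.mp (Finset.mem_filter.mp hi).2
    rw [psi_zpow_odd hoi]
    have hp := inv_pos.mpr (gold_zpow_pos i)
    nlinarith [h0 i]
  have heven : ∑ i ∈ s.filter (fun i => Even i), c i * ψ ^ i
      ≤ ∑ i ∈ s.filter (fun i => Even i), (φ ^ i)⁻¹ := by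
    apply Finset.sum_le_sum
    intro i hi
    have hei : Even i := (Finset.mem_filter.mp hi).2
    rw [psi_zpow_even hei]
    have hp := inv_pos.mpr (gold_zpow_pos i)
    nlinarith [h0 i, h1 i]
  have hcore : ∑ i ∈ s.filter (fun i => Even i), (φ ^ i)⁻¹ < φ ^ (1 - a) := by
    apply sum_phi_inv_lt
    intro i hi
    obtain ⟨his, hei⟩ := Finset.mem_filter.mp hi
    refine ⟨hs i his hei, ?_⟩
    obtain ⟨u, hu⟩ := hei
    obtain ⟨v, hv⟩ := ha
    exact ⟨u - v, by omega⟩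
  linarith

private lemma sum_psi_ge_bound (s : Finset ℤ) (c : ℤ → ℝ) (h0 : ∀ i, 0 ≤ c i)
    (h1 : ∀ i, c i ≤ 1) {a : ℤ} (ha : Odd a) (hs : ∀ i ∈ s, Odd i → a ≤ i) :
    -(φ ^ (1 - a)) < ∑ i ∈ s, c i * ψ ^ i := by
  classical
  have hsplit := Finset.sum_filter_add_sum_filter_not s (fun i => Odd i)
    (fun i => c i * ψ ^ i)
  have heven : 0 ≤ ∑ i ∈ s.filter (fun i => ¬ Odd i), c i * ψ ^ i := by
    apply Finset.sum_nonneg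
    intro i hi
    have hei : Even i := Int.not_odd_iff_even.mp (Finset.mem_filter.mp hi).2
    rw [psi_zpow_even hei]
    have hp := inv_pos.mpr (gold_zpow_pos i)
    nlinarith [h0 i]
  have hodd : ∑ i ∈ s.filter (fun i => Odd i), (-(φ ^ i)⁻¹)
      ≤ ∑ i ∈ s.filter (fun i => Odd i), c i * ψ ^ i := by
    apply Finset.sum_le_sum
    intro i hi
    have hoi : Odd i := (Finset.mem_filter.mp hi).2
    rw [psi_zpow_odd hoi]
    have hp := inv_pos.mpr (gold_zpow_pos i)
    nlinarith [h0 i, h1 i]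
  have hcore : ∑ i ∈ s.filter (fun i => Odd i), (φ ^ i)⁻¹ < φ ^ (1 - a) := by
    apply sum_phi_inv_lt
    intro i hi
    obtain ⟨his, hoi⟩ := Finset.mem_filter.mp hi
    refine ⟨hs i his hoi, ?_⟩
    obtain ⟨u, hu⟩ := hoi
    obtain ⟨v, hv⟩ := ha
    exact ⟨u - v, by omega⟩
  have hneg : -(φ ^ (1 - a)) < ∑ i ∈ s.filter (fun i => Odd i), (-(φ ^ i)⁻¹) := by
    rw [Finset.sum_neg_distrib]
    linarith
  linarith

private lemma lucas_binet : ∀ n : ℕ, (lucasNum n : ℝ) = φ ^ n + ψ ^ n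
  | 0 => by norm_num [lucasNum]
  | 1 => by
    rw [lucasNum, pow_one, pow_one, Real.goldenRatio_add_goldenConj]; norm_num
  | n + 2 => by
    have h1 := lucas_binet (n + 1)
    have h2 := lucas_binet n
    have hφ : (φ : ℝ) ^ (n + 2) = φ ^ (n + 1) + φ ^ n := by
      have : (φ : ℝ) ^ (n + 2) = φ ^ n * (φ * φ) := by ring
      rw [this, gold_mul_self]; ring
    have hψ : (ψ : ℝ) ^ (n + 2) = ψ ^ (n + 1) + ψ ^ n := by
      have : (ψ : ℝ) ^ (n + 2) = ψ ^ n * (ψ * ψ) := by ring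
      rw [this, goldConj_mul_self]; ring
    rw [lucasNum]
    push_cast
    rw [h1, h2, hφ, hψ]
    ring

private lemma lucas_pos : ∀ n : ℕ, 1 ≤ lucasNum n
  | 0 => by norm_num [lucasNum]
  | 1 => by norm_num [lucasNum]
  | n + 2 => by
    have := lucas_pos (n + 1)
    have := lucas_pos n
    rw [lucasNum]; omega

private lemma lucas_lt_succ {n : ℕ} (h : 1 ≤ n) : lucasNum n < lucasNum (n + 1) := by
  obtain ⟨m, rfl⟩ : ∃ m, n = m + 1 := ⟨n - 1, by omega⟩
  have := lucas_pos m
  show _ < lucasNum (m + 2)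
  rw [lucasNum]; omega

private lemma lucas_lt {a b : ℕ} (ha : 1 ≤ a) (hab : a < b) :
    lucasNum a < lucasNum b := by
  induction b with
  | zero => omega
  | succ b ih =>
    rcases Nat.lt_succ_iff_lt_or_eq.mp hab with h | h
    · exact (ih h).trans (lucas_lt_succ (by omega))
    · subst h; exact lucas_lt_succ ha

private lemma lucas_le {a b : ℕ} (ha : 1 ≤ a) (hab : a ≤ b) :
    lucasNum a ≤ lucasNum b := by
  rcases eq_or_lt_of_le hab with h | h
  · rw [h]
  · exact (lucas_lt ha h).le

private lemma lucas_two : lucasNum 2 = 3 := by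
  show lucasNum (0 + 2) = 3
  rw [lucasNum]
  norm_num [lucasNum]

private lemma psi_abs_lt_one : |ψ| < 1 :=
  abs_lt.mpr ⟨Real.neg_one_lt_goldenConj, Real.goldenConj_neg.trans one_pos⟩

private lemma psi_pow_neg_odd {n : ℕ} (h : Odd n) : ψ ^ n < 0 := h.pow_neg Real.goldenConj_neg

private lemma psi_pow_gt_neg_one {n : ℕ} (hn : n ≠ 0) : -1 < ψ ^ n := by
  have h1 : |ψ| ^ n < 1 := pow_lt_one₀ (abs_nonneg ψ) psi_abs_lt_one hn
  have h2 : |ψ ^ n| < 1 := by rwa [abs_pow]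
  have := neg_abs_le (ψ ^ n)
  linarith

end BergmanAux

/-- For a positive integer `N`, with `R` the minimum of the support of the
Bergman expansion of `N`: if `L_{2n} ≤ N ≤ L_{2n+1}` with `n ≥ 1` then
`R = -2n`, and if `L_{2n+1} + 1 ≤ N ≤ L_{2n+2} - 1` then `R = -(2n+2)`. -/
theorem min_support_bergman_lucas_interval (N : ℕ) (hN : 0 < N)
    (d : ℤ →₀ ℕ) (hd : IsBergman N d)
    (R : ℤ) (hR : d.support.min = (R : WithTop ℤ)) :
    (∀ n : ℕ, 1 ≤ n → lucasNum (2 * n) ≤ N → N ≤ lucasNum (2 * n + 1) →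
      R = -(2 * (n : ℤ))) ∧
    (∀ n : ℕ, lucasNum (2 * n + 1) + 1 ≤ N → N ≤ lucasNum (2 * n + 2) - 1 →
      R = -(2 * (n : ℤ) + 2)) := by
  classical
  obtain ⟨⟨hle1, hsum⟩, hnc⟩ := hd
  set s := d.support with hs_def
  have hphi_eq : goldenPhi = Real.goldenRatio := rfl
  rw [hphi_eq] at hsum
  -- conjugate representation
  have h₁ : ∑ i ∈ s, (((d i : ℤ)) : ℝ) * Real.goldenRatio ^ i = ((N : ℤ) : ℝ) := by
    push_cast
    exact hsum.symm
  have hpsi0 := conj_sum h₁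
  have hpsi : (N : ℝ) = ∑ i ∈ s, (d i : ℝ) * Real.goldenConj ^ i := by
    push_cast at hpsi0
    exact hpsi0.symm
  have hRmem : R ∈ s := Finset.mem_of_min hR
  have hge : ∀ i ∈ s, R ≤ i := by
    intro i hi
    have h := Finset.min_le hi
    rw [hR] at h
    exact_mod_cast h
  have hdR : d R = 1 := by
    have h1 := Finsupp.mem_support_iff.mp hRmem
    have h2 := hle1 R
    omega
  have hdR1 : d (R + 1) = 0 := by
    have h := hnc R
    rwa [hdR, one_mul] at h
  have hR1ns : R + 1 ∉ s := by
    rw [hs_def, Finsupp.mem_support_iff]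
    simp [hdR1]
  have herase : ∀ i ∈ s.erase R, R + 2 ≤ i := by
    intro i hi
    obtain ⟨hne, his⟩ := Finset.mem_erase.mp hi
    have h1 := hge i his
    have h2 : i ≠ R + 1 := fun h => hR1ns (h ▸ his)
    omega
  have hc0 : ∀ i : ℤ, (0:ℝ) ≤ ((d i : ℕ) : ℝ) := fun i => Nat.cast_nonneg _
  have hc1 : ∀ i : ℤ, ((d i : ℕ) : ℝ) ≤ 1 := fun i => by exact_mod_cast hle1 i
  have hNsplit : (N:ℝ) = Real.goldenConj ^ R +
      ∑ i ∈ s.erase R, (d i : ℝ) * Real.goldenConj ^ i := by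
    rw [hpsi, ← Finset.add_sum_erase s _ hRmem, hdR]
    norm_num
  have hN1 : (1:ℝ) ≤ (N:ℝ) := by exact_mod_cast hN
  -- master claim
  have master : 2 ≤ N → ∃ k : ℕ, R = -(2 * (k:ℤ)) - 2 ∧
      lucasNum (2*k+1) < N ∧ N ≤ lucasNum (2*k+3) := by
    intro hN2
    have hN2R : (2:ℝ) ≤ (N:ℝ) := by exact_mod_cast hN2
    rcases Int.even_or_odd R with hRE | hRO
    · -- R even
      have hpsiR : Real.goldenConj ^ R = (Real.goldenRatio ^ R)⁻¹ := psi_zpow_even hRE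
      rcases le_or_gt 0 R with hR0 | hRneg
      · exfalso
        have hb := sum_psi_le_bound s (fun i => ((d i : ℕ) : ℝ)) hc0 hc1 hRE
          (fun i hi _ => hge i hi)
        beta_reduce at hb
        rw [← hpsi] at hb
        have h2 : Real.goldenRatio ^ (1 - R) ≤ Real.goldenRatio ^ (1:ℤ) :=
          (zpow_le_zpow_iff_right₀ Real.one_lt_goldenRatio).mpr (by omega)
        rw [zpow_one] at h2
        have := Real.goldenRatio_lt_two
        linarith
      · obtain ⟨k, hk⟩ : ∃ k : ℕ, R = -(2*(k:ℤ)) - 2 := by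
          obtain ⟨v, hv⟩ := hRE
          exact ⟨(-v - 1).toNat, by omega⟩
        refine ⟨k, hk, ?_, ?_⟩
        · -- lower bound : lucasNum (2k+1) < N
          have hodd3 : Odd (R + 3) := by
            obtain ⟨v, hv⟩ := hRE
            exact ⟨v + 1, by omega⟩
          have hrest := sum_psi_ge_bound (s.erase R) (fun i => ((d i : ℕ) : ℝ))
            hc0 hc1 hodd3 ?_
          swap
          · intro i hi hoi
            have h1 := herase i hi
            obtain ⟨u, hu⟩ := hoi
            obtain ⟨v, hv⟩ := hRE
            omega
          beta_reduce at hrest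
          have hfib := gold_zpow_fib (-R - 2)
          rw [show -R - 2 + 2 = -R by ring, show -R - 2 + 1 = -R - 1 by ring] at hfib
          have hinv : (Real.goldenRatio ^ R)⁻¹ = Real.goldenRatio ^ (-R) := (zpow_neg _ _).symm
          have hexp : Real.goldenRatio ^ (-R - 1) = Real.goldenRatio ^ (2*k+1 : ℕ) := by
            rw [← zpow_natCast]
            congr 1
            push_cast
            omega
          have hexpr : (1 : ℤ) - (R + 3) = -R - 2 := by ring
          rw [hexpr] at hrest
          have hNgt : Real.goldenRatio ^ (2*k+1 : ℕ) < (N:ℝ) := by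
            rw [← hexp]
            rw [hNsplit, hpsiR, hinv]
            linarith [hfib, hrest]
          have hlb := lucas_binet (2*k+1)
          have hpow := psi_pow_neg_odd (n := 2*k+1) ⟨k, by ring⟩
          have : (lucasNum (2*k+1) : ℝ) < (N:ℝ) := by linarith
          exact_mod_cast this
        · -- upper bound : N ≤ lucasNum (2k+3)
          have hev2 : Even (R + 2) := by
            obtain ⟨v, hv⟩ := hRE
            exact ⟨v + 1, by omega⟩
          have hrest := sum_psi_le_bound (s.erase R) (fun i => ((d i : ℕ) : ℝ))
            hc0 hc1 hev2 (fun i hi _ => herase i hi)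
          beta_reduce at hrest
          have hfib := gold_zpow_fib (-R - 1)
          rw [show -R - 1 + 2 = -R + 1 by ring, show -R - 1 + 1 = -R by ring] at hfib
          have hinv : (Real.goldenRatio ^ R)⁻¹ = Real.goldenRatio ^ (-R) := (zpow_neg _ _).symm
          have hexp : Real.goldenRatio ^ (-R + 1) = Real.goldenRatio ^ (2*k+3 : ℕ) := by
            rw [← zpow_natCast]
            congr 1
            push_cast
            omega
          have hexpr : (1 : ℤ) - (R + 2) = -R - 1 := by ring
          rw [hexpr] at hrest
          have hNlt : (N:ℝ) < Real.goldenRatio ^ (2*k+3 : ℕ) := by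
            rw [← hexp, hfib]
            rw [hNsplit, hpsiR, hinv]
            linarith
          have hub := lucas_binet (2*k+3)
          have hpow := psi_pow_gt_neg_one (n := 2*k+3) (by omega)
          have hlt : (N:ℝ) < (lucasNum (2*k+3) : ℝ) + 1 := by linarith
          have : N < lucasNum (2*k+3) + 1 := by exact_mod_cast hlt
          omega
    · -- R odd : impossible
      exfalso
      have hpsiR : Real.goldenConj ^ R = -(Real.goldenRatio ^ R)⁻¹ := psi_zpow_odd hRO
      have hev3 : Even (R + 3) := by
        obtain ⟨t, ht⟩ := hRO
        exact ⟨t + 2, by omega⟩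
      have hrest := sum_psi_le_bound (s.erase R) (fun i => ((d i : ℕ) : ℝ))
        hc0 hc1 hev3 ?_
      swap
      · intro i hi hei
        have h1 := herase i hi
        obtain ⟨u, hu⟩ := hei
        obtain ⟨t, ht⟩ := hRO
        omega
      beta_reduce at hrest
      have hexpr : (1 : ℤ) - (R + 3) = -R - 2 := by ring
      rw [hexpr] at hrest
      have hinv : (Real.goldenRatio ^ R)⁻¹ = Real.goldenRatio ^ (-R) := (zpow_neg _ _).symm
      have hlt : Real.goldenRatio ^ (-R - 2) < Real.goldenRatio ^ (-R) :=
        zpow_lt_zpow_right₀ Real.one_lt_goldenRatio (by omega)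
      rw [hNsplit, hpsiR, hinv] at hN1
      linarith
  refine ⟨?_, ?_⟩
  · intro n hn hlow hhigh
    have hN2 : 2 ≤ N := by
      have h3 : lucasNum 2 ≤ lucasNum (2*n) := lucas_le (by norm_num) (by omega)
      have h4 := lucas_two
      omega
    obtain ⟨k, hkR, hlo, hhi⟩ := master hN2
    have hkn : k + 1 = n := by
      by_contra hne
      rcases Nat.lt_or_ge (k+1) n with h | h
      · have h1 : lucasNum (2*k+3) < lucasNum (2*n) := lucas_lt (by omega) (by omega)
        omega
      · have h' : n < k + 1 := by omega
        have h1 : lucasNum (2*n+1) ≤ lucasNum (2*k+1) := lucas_le (by omega) (by omega)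
        omega
    have : ((k:ℤ) + 1) = (n:ℤ) := by exact_mod_cast hkn
    omega
  · intro n hlow hhigh
    have hN2 : 2 ≤ N := by
      have := lucas_pos (2*n+1)
      omega
    obtain ⟨k, hkR, hlo, hhi⟩ := master hN2
    have hpos := lucas_pos (2*n+2)
    have hkn : k = n := by
      by_contra hne
      rcases Nat.lt_or_ge k n with h | h
      · have h1 : lucasNum (2*k+3) ≤ lucasNum (2*n+1) := lucas_le (by omega) (by omega)
        omega
      · have h' : n < k := by omega
        have h1 : lucasNum (2*n+2) ≤ lucasNum (2*k+1) := lucas_le (by omega) (by omega)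
        omega
    subst hkn
    omega
end
end

section
/- For every n ≥ 1 and every integer k with 0 ≤ k ≤ L_{2n−1}, if d is the Bergman expansion of k (the zero function when k = 0), then d(i) = 0 for all i with |i| ≥ 2n − 1, and the function d' defined by d'(2n) = d'(−2n) = 1 and d'(i) = d(i) for all i ≠ ±2n is the Bergman expansion of L_{2n} + k. -/
noncomputable section

open Finset
open Real

lemma goldenPhi_eq : goldenPhi = goldenRatio := rfl

lemma gold_inv_eq_s14 : goldenRatio⁻¹ = goldenRatio - 1 :=
  inv_eq_of_mul_eq_one_right (by linear_combination goldenRatio_sq)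

lemma goldConj_inv_eq_s14 : goldenConj⁻¹ = goldenConj - 1 :=
  inv_eq_of_mul_eq_one_right (by linear_combination goldenConj_sq)

lemma phiConj_zpow (i : ℤ) : ∃ p q : ℤ, goldenRatio ^ i = p + q * goldenRatio ∧
    goldenConj ^ i = p + q * goldenConj := by
  induction i using Int.induction_on with
  | zero => exact ⟨1, 0, by simp, by simp⟩
  | succ j ih =>
    obtain ⟨p, q, h1, h2⟩ := ih
    refine ⟨q, p + q, ?_, ?_⟩
    · rw [zpow_add₀ goldenRatio_ne_zero, h1, zpow_one]
      push_cast
      linear_combination (q : ℝ) * goldenRatio_sq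
    · rw [zpow_add₀ goldenConj_ne_zero, h2, zpow_one]
      push_cast
      linear_combination (q : ℝ) * goldenConj_sq
  | pred j ih =>
    obtain ⟨p, q, h1, h2⟩ := ih
    refine ⟨q - p, p, ?_, ?_⟩
    · have e : (-(j:ℤ) - 1) = (-(j:ℤ)) + (-1) := by ring
      rw [e, zpow_add₀ goldenRatio_ne_zero, h1, zpow_neg_one, gold_inv_eq_s14]
      push_cast
      linear_combination ((q:ℝ)/4) * Real.sq_sqrt (by norm_num : (0:ℝ) ≤ 5)
    · have e : (-(j:ℤ) - 1) = (-(j:ℤ)) + (-1) := by ring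
      rw [e, zpow_add₀ goldenConj_ne_zero, h2, zpow_neg_one, goldConj_inv_eq_s14]
      push_cast
      linear_combination ((q:ℝ)/4) * Real.sq_sqrt (by norm_num : (0:ℝ) ≤ 5)

/-- If a natural number equals a finite sum of distinct integer powers of φ,
then it also equals the corresponding sum of powers of ψ. -/
lemma sum_conj (S : Finset ℤ) (k : ℕ) (h : (k : ℝ) = ∑ i ∈ S, goldenRatio ^ i) :
    (k : ℝ) = ∑ i ∈ S, goldenConj ^ i := by
  choose p q h1 h2 using phiConj_zpow
  have hsum : ∀ x : ℝ, ∑ i ∈ S, ((p i : ℝ) + (q i : ℝ) * x)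
      = ((∑ i ∈ S, p i : ℤ) : ℝ) + ((∑ i ∈ S, q i : ℤ) : ℝ) * x := by
    intro x
    rw [Finset.sum_add_distrib, ← Finset.sum_mul]
    push_cast
    ring
  have hP : (k : ℝ) = ((∑ i ∈ S, p i : ℤ) : ℝ) + ((∑ i ∈ S, q i : ℤ) : ℝ) * goldenRatio := by
    rw [h, ← hsum]
    exact Finset.sum_congr rfl fun i _ => h1 i
  have hQ : (∑ i ∈ S, q i) = 0 := by
    by_contra hQ
    apply goldenRatio_irrational
    refine ⟨((k : ℚ) - (∑ i ∈ S, p i : ℤ)) / (∑ i ∈ S, q i : ℤ), ?_⟩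
    have hQ' : ((∑ i ∈ S, q i : ℤ) : ℝ) ≠ 0 := Int.cast_ne_zero.mpr hQ
    push_cast at hQ' hP ⊢
    rw [div_eq_iff hQ']
    linear_combination hP
  have hPk : ((∑ i ∈ S, p i : ℤ) : ℝ) = k := by rw [hP, hQ]; push_cast; ring
  calc (k : ℝ) = ((∑ i ∈ S, p i : ℤ) : ℝ) + ((∑ i ∈ S, q i : ℤ) : ℝ) * goldenConj := by
        rw [hPk, hQ]; push_cast; ring
    _ = ∑ i ∈ S, goldenConj ^ i := by
        rw [← hsum]
        exact (Finset.sum_congr rfl fun i _ => (h2 i).symm)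

/-- Geometric bound: a sum of `φ^(-i)` over indices `i ≥ a` of equal parity
is at most `φ^(1-a)`. -/
lemma geom_bound (T : Finset ℤ) : ∀ a : ℤ, (∀ i ∈ T, a ≤ i) →
    (∀ i ∈ T, ∀ j ∈ T, Even (i - j)) →
    ∑ i ∈ T, goldenRatio ^ (-i) ≤ goldenRatio ^ (1 - a) := by
  induction T using Finset.strongInduction with
  | _ T ih =>
    intro a ha hpar
    rcases T.eq_empty_or_nonempty with rfl | hne
    · simp only [Finset.sum_empty]
      positivity
    · set t := T.min' hne with ht
      have htT : t ∈ T := T.min'_mem hne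
      have hkey : ∀ j ∈ T.erase t, t + 2 ≤ j := by
        intro j hj
        have hj1 : j ∈ T := Finset.mem_of_mem_erase hj
        have hj2 : j ≠ t := Finset.ne_of_mem_erase hj
        have hj3 : t ≤ j := T.min'_le j hj1
        obtain ⟨c, hc⟩ := hpar j hj1 t htT
        omega
      have hsub : T.erase t ⊂ T := Finset.erase_ssubset htT
      have hrec := ih (T.erase t) hsub (t + 2) hkey
        (fun i hi j hj => hpar i (Finset.mem_of_mem_erase hi) j (Finset.mem_of_mem_erase hj))
      have hsplit : ∑ i ∈ T, goldenRatio ^ (-i)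
          = goldenRatio ^ (-t) + ∑ i ∈ T.erase t, goldenRatio ^ (-i) :=
        (Finset.add_sum_erase T _ htT).symm
      have halg : goldenRatio ^ (-t) + goldenRatio ^ (1 - (t + 2)) = goldenRatio ^ (1 - t) := by
        have e1 : (1 : ℤ) - (t + 2) = -t + (-1) := by ring
        have e2 : (1 : ℤ) - t = -t + 1 := by ring
        rw [e1, e2, zpow_add₀ goldenRatio_ne_zero, zpow_add₀ goldenRatio_ne_zero, zpow_neg_one, zpow_one,
          gold_inv_eq_s14]
        ring
      have hmono : goldenRatio ^ (1 - t) ≤ goldenRatio ^ (1 - a) := by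
        apply zpow_le_zpow_right₀ one_lt_goldenRatio.le
        have := ha t htT
        omega
      calc ∑ i ∈ T, goldenRatio ^ (-i)
          = goldenRatio ^ (-t) + ∑ i ∈ T.erase t, goldenRatio ^ (-i) := hsplit
        _ ≤ goldenRatio ^ (-t) + goldenRatio ^ (1 - (t + 2)) := by linarith
        _ = goldenRatio ^ (1 - t) := halg
        _ ≤ goldenRatio ^ (1 - a) := hmono

lemma lucas_real : ∀ m : ℕ, (lucasNum m : ℝ) = goldenRatio ^ m + goldenConj ^ m := by
  have step : ∀ (x : ℝ), x ^ 2 = x + 1 → ∀ m : ℕ, x ^ (m + 2) = x ^ (m + 1) + x ^ m := by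
    intro x hx m
    have : x ^ (m + 2) = x ^ m * x ^ 2 := by ring
    rw [this, hx]
    ring
  have main : ∀ m : ℕ, (lucasNum m : ℝ) = goldenRatio ^ m + goldenConj ^ m ∧
      (lucasNum (m + 1) : ℝ) = goldenRatio ^ (m + 1) + goldenConj ^ (m + 1) := by
    intro m
    induction m with
    | zero =>
      constructor
      · show ((2 : ℕ) : ℝ) = _
        simp [goldenRatio_add_goldenConj]
        norm_num [goldenRatio_add_goldenConj]
      · show ((1 : ℕ) : ℝ) = _
        simp [goldenRatio_add_goldenConj]
    | succ j ih =>
      refine ⟨ih.2, ?_⟩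
      show ((lucasNum (j + 1) + lucasNum j : ℕ) : ℝ) = _
      push_cast
      rw [ih.1, ih.2, step _ goldenRatio_sq, step _ goldenConj_sq]
      ring
  exact fun m => (main m).1
lemma psi_zpow_even_s14 (j : ℤ) (hj : Even j) : goldenConj ^ j = goldenRatio ^ (-j) := by
  have h : goldenConj = -goldenRatio⁻¹ := by rw [inv_goldenRatio]; ring
  rw [h, hj.neg_zpow, inv_zpow, ← zpow_neg]

lemma psi_zpow_odd_s14 (j : ℤ) (hj : Odd j) : goldenConj ^ j = -(goldenRatio ^ (-j)) := by
  have h : goldenConj = -goldenRatio⁻¹ := by rw [inv_goldenRatio]; ring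
  rw [h, hj.neg_zpow, inv_zpow, ← zpow_neg]

lemma psi_pow_even_nat (m : ℕ) : goldenConj ^ (2 * m) = goldenRatio ^ (-(2 * (m:ℤ))) := by
  have h : goldenConj = -goldenRatio⁻¹ := by rw [inv_goldenRatio]; ring
  rw [h, Even.neg_pow ⟨m, by ring⟩, inv_pow, ← zpow_natCast goldenRatio (2*m), ← zpow_neg]
  norm_num

lemma halg_sub (t : ℤ) : goldenRatio ^ (-t) - goldenRatio ^ (-t - 2) = goldenRatio ^ (-t - 1) := by
  have h1 : goldenRatio ^ (-t) = goldenRatio ^ (-t - 1) * goldenRatio := by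
    rw [← zpow_add_one₀ goldenRatio_ne_zero]; congr 1; ring
  have h2 : goldenRatio ^ (-t - 2) = goldenRatio ^ (-t - 1) * goldenRatio⁻¹ := by
    rw [show -t - 2 = (-t - 1) - 1 by ring, zpow_sub_one₀ goldenRatio_ne_zero]
  rw [h1, h2, gold_inv_eq_s14]
  ring

/-- Support bound for a Bergman expansion of `k ≤ L_{2n-1}`. -/
lemma bergman_support_bound (n : ℕ) (hn : 1 ≤ n) (k : ℕ) (hk : k ≤ lucasNum (2 * n - 1))
    (d : ℤ →₀ ℕ) (hd : IsBergman k d) :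
    ∀ i : ℤ, 2 * (n : ℤ) - 1 ≤ |i| → d i = 0 := by
  obtain ⟨⟨hle, hsum⟩, hnc⟩ := hd
  have hdig : ∀ i ∈ d.support, ((d i : ℝ)) = 1 := by
    intro i hi
    have h1 : d i ≠ 0 := Finsupp.mem_support_iff.mp hi
    have := hle i
    interval_cases h : d i <;> simp_all
  have hS : (k : ℝ) = ∑ i ∈ d.support, goldenRatio ^ i := by
    rw [hsum]
    exact Finset.sum_congr rfl fun i hi => by rw [hdig i hi, one_mul, goldenPhi_eq]
  have hCj : (k : ℝ) = ∑ i ∈ d.support, goldenConj ^ i := sum_conj _ _ hS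
  -- the key strict inequality L_{2n-1} < φ^{2n-1}
  have hexp : ((2 * n - 1 : ℕ) : ℤ) = 2 * (n : ℤ) - 1 := by omega
  have hLlt : (lucasNum (2 * n - 1) : ℝ) < goldenRatio ^ (2 * (n : ℤ) - 1) := by
    rw [lucas_real]
    have hneg : goldenConj ^ (2 * n - 1) < 0 :=
      Odd.pow_neg ⟨n - 1, by omega⟩ goldenConj_neg
    have : goldenRatio ^ (2 * (n:ℤ) - 1) = goldenRatio ^ (2 * n - 1 : ℕ) := by
      rw [← hexp, zpow_natCast]
    linarith
  intro i hi
  by_contra h0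
  have hiS : i ∈ d.support := Finsupp.mem_support_iff.mpr h0
  have hknn : (0 : ℝ) ≤ (k : ℝ) := Nat.cast_nonneg k
  have hkle : (k : ℝ) ≤ (lucasNum (2 * n - 1) : ℝ) := Nat.cast_le.mpr hk
  rcases le_or_gt 0 i with hpos | hneg
  · -- positive side
    rw [abs_of_nonneg hpos] at hi
    have h1 : goldenRatio ^ i ≤ (k : ℝ) := by
      rw [hS]
      exact Finset.single_le_sum (fun j _ => zpow_nonneg goldenRatio_pos.le j) hiS
    have h2 : goldenRatio ^ (2 * (n:ℤ) - 1) ≤ goldenRatio ^ i :=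
      zpow_le_zpow_right₀ one_lt_goldenRatio.le hi
    linarith
  · -- negative side, conjugate argument
    rw [abs_of_neg hneg] at hi
    have hne : d.support.Nonempty := ⟨i, hiS⟩
    set t := d.support.min' hne with htdef
    have htS : t ∈ d.support := d.support.min'_mem hne
    have hti : t ≤ i := d.support.min'_le i hiS
    have htneg : t ≤ -(2 * (n:ℤ) - 1) := by omega
    have ht1 : d (t + 1) = 0 := by
      have := hnc t
      have hdt : d t ≠ 0 := Finsupp.mem_support_iff.mp htS
      exact (Nat.mul_eq_zero.mp this).resolve_left hdt
    have hstep : ∀ j ∈ d.support.erase t, t + 2 ≤ j := by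
      intro j hj
      have hj1 : j ∈ d.support := Finset.mem_of_mem_erase hj
      have hj2 : j ≠ t := Finset.ne_of_mem_erase hj
      have hj3 : t ≤ j := d.support.min'_le j hj1
      have hj4 : j ≠ t + 1 := by
        intro h
        exact (Finsupp.mem_support_iff.mp hj1) (h ▸ ht1)
      omega
    set T1 := (d.support.erase t).filter (fun j => Even (j - t)) with hT1
    set T2 := (d.support.erase t).filter (fun j => ¬Even (j - t)) with hT2
    have hsplit : (k : ℝ) = goldenConj ^ t + ((∑ j ∈ T1, goldenConj ^ j) +
        (∑ j ∈ T2, goldenConj ^ j)) := by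
      rw [hCj, ← Finset.add_sum_erase _ _ htS,
        ← Finset.sum_filter_add_sum_filter_not (d.support.erase t) (fun j => Even (j - t))]
    have hT2mem : ∀ j ∈ T2, t + 3 ≤ j ∧ ¬Even (j - t) := by
      intro j hj
      rw [hT2, Finset.mem_filter] at hj
      have := hstep j hj.1
      refine ⟨?_, hj.2⟩
      rcases Int.even_or_odd (j - t) with he | ho
      · exact absurd he hj.2
      · obtain ⟨c, hc⟩ := ho; omega
    have hT2bound : ∑ j ∈ T2, goldenRatio ^ (-j) ≤ goldenRatio ^ (-t - 2) := by
      have := geom_bound T2 (t + 3) (fun j hj => (hT2mem j hj).1) ?_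
      · have e : (1 : ℤ) - (t + 3) = -t - 2 := by ring
        rwa [e] at this
      · intro a ha b hb
        have h1 := (hT2mem a ha).2
        have h2 := (hT2mem b hb).2
        rw [Int.not_even_iff] at h1 h2
        rw [Int.even_iff]
        omega
    rcases Int.even_or_odd t with hev | hod
    · -- t even : k ≥ φ^{-t-1} ≥ φ^{2n-1} > L ≥ k
      have htlow : -t - 1 ≥ 2 * (n:ℤ) - 1 := by
        obtain ⟨c, hc⟩ := hev; omega
      have e1 : goldenConj ^ t = goldenRatio ^ (-t) := psi_zpow_even_s14 t hev
      have e2 : (0:ℝ) ≤ ∑ j ∈ T1, goldenConj ^ j := by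
        apply Finset.sum_nonneg
        intro j hj
        rw [hT1, Finset.mem_filter] at hj
        have hjev : Even j := by
          obtain ⟨c, hc⟩ := hev; obtain ⟨e, he⟩ := hj.2
          exact ⟨c + e, by omega⟩
        rw [psi_zpow_even_s14 j hjev]
        exact zpow_nonneg goldenRatio_pos.le _
      have e3 : ∑ j ∈ T2, goldenConj ^ j ≥ -(goldenRatio ^ (-t - 2)) := by
        have : ∑ j ∈ T2, goldenConj ^ j = -∑ j ∈ T2, goldenRatio ^ (-j) := by
          rw [← Finset.sum_neg_distrib]
          refine Finset.sum_congr rfl fun j hj => ?_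
          have hjodd : Odd j := by
            have h1 := (hT2mem j hj).2
            rw [Int.not_even_iff] at h1
            obtain ⟨c, hc⟩ := hev
            exact ⟨j / 2, by omega⟩
          exact psi_zpow_odd_s14 j hjodd
        rw [this]
        linarith [hT2bound]
      have hklow : goldenRatio ^ (-t - 1) ≤ (k : ℝ) := by
        rw [hsplit, e1]
        have := halg_sub t
        linarith
      have : goldenRatio ^ (2 * (n:ℤ) - 1) ≤ goldenRatio ^ (-t - 1) :=
        zpow_le_zpow_right₀ one_lt_goldenRatio.le htlow
      linarith
    · -- t odd : k < 0, contradiction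
      have e1 : goldenConj ^ t = -(goldenRatio ^ (-t)) := psi_zpow_odd_s14 t hod
      have e2 : ∑ j ∈ T1, goldenConj ^ j ≤ 0 := by
        apply Finset.sum_nonpos
        intro j hj
        rw [hT1, Finset.mem_filter] at hj
        have hjodd : Odd j := by
          obtain ⟨c, hc⟩ := hod; obtain ⟨e, he⟩ := hj.2
          exact ⟨c + e, by omega⟩
        rw [psi_zpow_odd_s14 j hjodd]
        have : (0:ℝ) ≤ goldenRatio ^ (-j) := zpow_nonneg goldenRatio_pos.le _
        linarith
      have e3 : ∑ j ∈ T2, goldenConj ^ j ≤ goldenRatio ^ (-t - 2) := by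
        have : ∑ j ∈ T2, goldenConj ^ j = ∑ j ∈ T2, goldenRatio ^ (-j) := by
          refine Finset.sum_congr rfl fun j hj => ?_
          have hjev : Even j := by
            have h1 := (hT2mem j hj).2
            rw [Int.not_even_iff] at h1
            obtain ⟨c, hc⟩ := hod
            exact ⟨j / 2, by omega⟩
          exact psi_zpow_even_s14 j hjev
        rw [this]
        exact hT2bound
      have hpos : (0:ℝ) < goldenRatio ^ (-t - 1) := zpow_pos goldenRatio_pos _
      have := halg_sub t
      rw [hsplit, e1] at hknn
      linarith

/-- For `n ≥ 1` and `0 ≤ k ≤ L_{2n-1}`, the Bergman expansion `d` of `k`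
vanishes at every index `i` with `|i| ≥ 2n - 1`, and adding the digits 1 at
positions `2n` and `-2n` yields the Bergman expansion of `L_{2n} + k`. -/
theorem bergman_lucas_add (n : ℕ) (hn : 1 ≤ n) (k : ℕ) (hk : k ≤ lucasNum (2 * n - 1))
    (d : ℤ →₀ ℕ) (hd : IsBergman k d) :
    (∀ i : ℤ, 2 * (n : ℤ) - 1 ≤ |i| → d i = 0) ∧
    ∀ d' : ℤ →₀ ℕ, d' (2 * (n : ℤ)) = 1 → d' (-(2 * (n : ℤ))) = 1 →
      (∀ i : ℤ, i ≠ 2 * (n : ℤ) → i ≠ -(2 * (n : ℤ)) → d' i = d i) →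
      IsBergman (lucasNum (2 * n) + k) d' := by
  have hz := bergman_support_bound n hn k hk d hd
  obtain ⟨⟨hle, hsum⟩, hnc⟩ := hd
  have hn' : (1 : ℤ) ≤ (n : ℤ) := by exact_mod_cast hn
  have habs : ∀ j : ℤ, 2 * (n:ℤ) - 1 ≤ j ∨ j ≤ -(2 * (n:ℤ) - 1) → d j = 0 := by
    intro j hj
    apply hz
    rcases hj with h | h
    · rw [abs_of_nonneg (by omega)]; omega
    · rw [abs_of_nonpos (by omega)]; omega
  have hd2n : d (2 * (n:ℤ)) = 0 := habs _ (by omega)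
  have hdm2n : d (-(2 * (n:ℤ))) = 0 := habs _ (by omega)
  have hd2n1 : d (2 * (n:ℤ) + 1) = 0 := habs _ (by omega)
  have hd2nm1 : d (2 * (n:ℤ) - 1) = 0 := habs _ (by omega)
  have hdm2n1 : d (-(2 * (n:ℤ)) + 1) = 0 := habs _ (by omega)
  have hdm2nm1 : d (-(2 * (n:ℤ)) - 1) = 0 := habs _ (by omega)
  refine ⟨hz, ?_⟩
  intro d' h1 h2 h3
  have hne1 : (2 * (n:ℤ)) ≠ -(2 * (n:ℤ)) := by omega
  have hsupp : d'.support = insert (2 * (n:ℤ)) (insert (-(2 * (n:ℤ))) d.support) := by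
    ext j
    simp only [Finsupp.mem_support_iff, Finset.mem_insert]
    by_cases hj1 : j = 2 * (n:ℤ)
    · subst hj1; simp [h1]
    · by_cases hj2 : j = -(2 * (n:ℤ))
      · subst hj2; simp [h2, hj1]
      · rw [h3 j hj1 hj2]; simp [hj1, hj2]
  have hmem1 : (2 * (n:ℤ)) ∉ insert (-(2 * (n:ℤ))) d.support := by
    simp [hne1, Finsupp.mem_support_iff, hd2n]
  have hmem2 : (-(2 * (n:ℤ))) ∉ d.support := by
    simp [Finsupp.mem_support_iff, hdm2n]
  have hL : (lucasNum (2 * n) : ℝ) = goldenRatio ^ (2 * (n:ℤ)) + goldenRatio ^ (-(2 * (n:ℤ))) := by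
    rw [lucas_real, psi_pow_even_nat, ← zpow_natCast goldenRatio (2 * n)]
    norm_cast
  refine ⟨⟨?_, ?_⟩, ?_⟩
  · -- digits ≤ 1
    intro i
    by_cases hi1 : i = 2 * (n:ℤ)
    · subst hi1; rw [h1]
    · by_cases hi2 : i = -(2 * (n:ℤ))
      · subst hi2; rw [h2]
      · rw [h3 i hi1 hi2]; exact hle i
  · -- sum
    rw [hsupp, Finset.sum_insert hmem1, Finset.sum_insert hmem2, h1, h2]
    have hrest : ∑ i ∈ d.support, ((d' i : ℝ)) * goldenPhi ^ i
        = ∑ i ∈ d.support, ((d i : ℝ)) * goldenPhi ^ i := by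
      refine Finset.sum_congr rfl fun i hi => ?_
      have hi0 : d i ≠ 0 := Finsupp.mem_support_iff.mp hi
      have hi1 : i ≠ 2 * (n:ℤ) := fun h => hi0 (h ▸ hd2n)
      have hi2 : i ≠ -(2 * (n:ℤ)) := fun h => hi0 (h ▸ hdm2n)
      rw [h3 i hi1 hi2]
    rw [hrest, ← hsum]
    rw [goldenPhi_eq]
    push_cast
    rw [hL]
    ring
  · -- no two consecutive digits
    intro i
    by_cases hi1 : i = 2 * (n:ℤ)
    · subst hi1
      have : d' (2 * (n:ℤ) + 1) = 0 := by
        rw [h3 _ (by omega) (by omega)]; exact hd2n1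
      rw [this, Nat.mul_zero]
    · by_cases hi2 : i + 1 = 2 * (n:ℤ)
      · have : d' i = 0 := by
          rw [h3 _ (by omega) (by omega)]
          rw [show i = 2 * (n:ℤ) - 1 by omega]
          exact hd2nm1
        rw [this, Nat.zero_mul]
      · by_cases hi3 : i = -(2 * (n:ℤ))
        · subst hi3
          have : d' (-(2 * (n:ℤ)) + 1) = 0 := by
            rw [h3 _ (by omega) (by omega)]; exact hdm2n1
          rw [this, Nat.mul_zero]
        · by_cases hi4 : i + 1 = -(2 * (n:ℤ))
          · have : d' i = 0 := by
              rw [h3 _ (by omega) (by omega)]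
              rw [show i = -(2 * (n:ℤ)) - 1 by omega]
              exact hdm2nm1
            rw [this, Nat.zero_mul]
          · rw [h3 i hi1 hi3, h3 (i + 1) (by omega) (by omega)]
            exact hnc i
end
end

section
/- For every n ≥ 1, TotFIB(F_{2n+2} · L_{2n}) = 2n. -/
noncomputable section

open Finset

/-- representations with indices in [2, B] -/
def reps (B N : ℕ) : Finset (Finset ℕ) :=
  ((Finset.range (B+1)).powerset).filter
    (fun S => (∀ i ∈ S, 2 ≤ i) ∧ ∑ i ∈ S, Nat.fib i = N)

lemma lucas_eq (k : ℕ) : lucasNum (k+1) = Nat.fib k + Nat.fib (k+2) := by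
  induction k using Nat.twoStepInduction with
  | zero => decide
  | one => decide
  | more k ih1 ih2 =>
    show lucasNum (k+2) + lucasNum (k+1) = _
    rw [ih1, ih2, Nat.fib_add_two (n := k+2), Nat.fib_add_two (n := k)]
    ring

lemma catalan3 (k : ℕ) :
    Nat.fib (2*k+4) * Nat.fib (2*k+1) = Nat.fib (2*k+2) * Nat.fib (2*k+3) + 1 := by
  induction k with
  | zero => decide
  | succ k ih =>
    have h1 : Nat.fib (2*k+3) = Nat.fib (2*k+1) + Nat.fib (2*k+2) := Nat.fib_add_two
    have h2 : Nat.fib (2*k+4) = Nat.fib (2*k+2) + Nat.fib (2*k+3) := Nat.fib_add_two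
    have h3 : Nat.fib (2*k+5) = Nat.fib (2*k+3) + Nat.fib (2*k+4) := Nat.fib_add_two
    have h4 : Nat.fib (2*k+6) = Nat.fib (2*k+4) + Nat.fib (2*k+5) := Nat.fib_add_two
    have e5 : 2*(k+1)+3 = 2*k+5 := by ring
    have e6 : 2*(k+1)+4 = 2*k+6 := by ring
    have e1 : 2*(k+1)+1 = 2*k+3 := by ring
    have e2 : 2*(k+1)+2 = 2*k+4 := by ring
    rw [e1, e2, e5, e6, h4, h3, h2, h1]
    set a := Nat.fib (2*k+1)
    set b := Nat.fib (2*k+2)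
    rw [h2, h1] at ih
    nlinarith [ih]

lemma key_val (n : ℕ) (hn : 1 ≤ n) :
    Nat.fib (2*n+2) * lucasNum (2*n) = Nat.fib (4*n+2) + 1 := by
  obtain ⟨m, rfl⟩ := Nat.exists_eq_add_of_le hn
  have hl : lucasNum (2*(1+m)) = Nat.fib (2*m+1) + Nat.fib (2*m+3) := by
    have h : 2*(1+m) = (2*m+1)+1 := by ring
    rw [h, lucas_eq]
  rw [hl]
  have hfa : Nat.fib (4*(1+m)+2) = Nat.fib ((2*m+2) + (2*m+3) + 1) := by
    congr 1; ring
  have := Nat.fib_add (2*m+2) (2*m+3)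
  rw [hfa, this]
  have e : 2*(1+m)+2 = 2*m+4 := by ring
  rw [e]
  have hc := catalan3 m
  have e2 : 2*m+2+1 = 2*m+3 := by omega
  have e3 : 2*m+3+1 = 2*m+4 := by omega
  rw [e2, e3]
  nlinarith [hc]

/-- sum bound -/
lemma sum_fib_lt (m : ℕ) (S : Finset ℕ) (hS : S ⊆ Finset.range m) :
    ∑ i ∈ S, Nat.fib i ≤ Nat.fib (m+1) - 1 := by
  have h1 : ∑ i ∈ S, Nat.fib i ≤ ∑ i ∈ Finset.range m, Nat.fib i :=
    Finset.sum_le_sum_of_subset hS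
  have h2 : Nat.fib (m+1) = (∑ k ∈ Finset.range m, Nat.fib k) + 1 :=
    Nat.fib_succ_eq_succ_sum m
  omega

/-- TotFIB equals card of reps for big enough B -/
lemma totFIB_eq_reps (N B : ℕ) (hB : 2 ≤ B) (h : N < Nat.fib (B+1)) :
    TotFIB N = (reps B N).card := by
  rw [TotFIB, ← Set.ncard_coe_finset]
  congr 1
  ext S
  simp only [reps, Finset.coe_filter, Finset.mem_powerset, Set.mem_setOf_eq,
    Finset.mem_coe]
  constructor
  · rintro ⟨h2, hsum⟩
    refine ⟨?_, h2, hsum⟩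
    intro i hi
    rw [Finset.mem_range]
    by_contra hc
    push_neg at hc
    have : Nat.fib (B+1) ≤ Nat.fib i := Nat.fib_mono hc
    have hle : Nat.fib i ≤ ∑ j ∈ S, Nat.fib j := Finset.single_le_sum (fun j _ => Nat.zero_le _) hi
    omega
  · rintro ⟨_, h2, hsum⟩
    exact ⟨h2, hsum⟩

/-- recursion: split on membership of B (top index) -/
lemma reps_card_split (B N : ℕ) (hB : 3 ≤ B) (hN : Nat.fib B ≤ N) :
    (reps B N).card = (reps (B-1) (N - Nat.fib B)).card + (reps (B-1) N).card := by
  classical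
  have hsplit : reps B N = (reps B N).filter (fun S => B ∈ S) ∪ (reps B N).filter (fun S => B ∉ S) := by
    rw [Finset.filter_union_filter_not_eq]
  have hdisj : Disjoint ((reps B N).filter (fun S => B ∈ S)) ((reps B N).filter (fun S => B ∉ S)) :=
    Finset.disjoint_filter_filter_not _ _ _
  rw [hsplit, Finset.card_union_of_disjoint hdisj]
  congr 1
  · -- bijection S ↦ S.erase B
    apply Finset.card_bij (fun S _ => S.erase B)
    · intro S hS
      simp only [Finset.mem_filter, reps, Finset.mem_powerset] at hS ⊢
      obtain ⟨⟨hsub, h2, hsum⟩, hmem⟩ := hS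
      refine ⟨?_, fun i hi => h2 i (Finset.mem_of_mem_erase hi), ?_⟩
      · intro i hi
        have hiS := Finset.mem_of_mem_erase hi
        have hne := Finset.ne_of_mem_erase hi
        have : i ∈ Finset.range (B+1) := hsub hiS
        rw [Finset.mem_range] at this ⊢
        omega
      · have : ∑ i ∈ S, Nat.fib i = Nat.fib B + ∑ i ∈ S.erase B, Nat.fib i :=
          (Finset.add_sum_erase S Nat.fib hmem).symm
        omega
    · intro S hS T hT hST
      simp only [Finset.mem_filter] at hS hT
      have : insert B (S.erase B) = insert B (T.erase B) := by rw [hST]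
      rwa [Finset.insert_erase hS.2, Finset.insert_erase hT.2] at this
    · intro T hT
      refine ⟨insert B T, ?_, ?_⟩
      · simp only [Finset.mem_filter, reps, Finset.mem_powerset] at hT ⊢
        obtain ⟨hsub, h2, hsum⟩ := hT
        have hBT : B ∉ T := by
          intro h
          have := hsub h
          rw [Finset.mem_range] at this
          omega
        refine ⟨⟨?_, ?_, ?_⟩, Finset.mem_insert_self _ _⟩
        · intro i hi
          rcases Finset.mem_insert.mp hi with rfl | hi
          · exact Finset.self_mem_range_succ _
          · have := hsub hi; rw [Finset.mem_range] at this ⊢; omega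
        · intro i hi
          rcases Finset.mem_insert.mp hi with rfl | hi
          · omega
          · exact h2 i hi
        · rw [Finset.sum_insert hBT, hsum]
          omega
      · simp only [Finset.mem_filter, reps, Finset.mem_powerset] at hT
        have hBT : B ∉ T := by
          intro h
          have := hT.1 h
          rw [Finset.mem_range] at this
          omega
        rw [Finset.erase_insert hBT]
  · -- not containing B: same as reps (B-1)
    congr 1
    ext S
    simp only [Finset.mem_filter, reps, Finset.mem_powerset]
    constructor
    · rintro ⟨⟨hsub, h2, hsum⟩, hmem⟩
      refine ⟨?_, h2, hsum⟩
      intro i hi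
      have hr := hsub hi
      rw [Finset.mem_range] at hr ⊢
      have : i ≠ B := fun h => hmem (h ▸ hi)
      omega
    · rintro ⟨hsub, h2, hsum⟩
      have hBS : B ∉ S := by
        intro h
        have := hsub h
        rw [Finset.mem_range] at this
        omega
      refine ⟨⟨?_, h2, hsum⟩, hBS⟩
      intro i hi
      have := hsub hi
      rw [Finset.mem_range] at this ⊢
      omega

lemma reps_empty (B N : ℕ) (h : Nat.fib (B+2) ≤ N) : reps B N = ∅ := by
  rw [Finset.eq_empty_iff_forall_notMem]
  intro S hS
  simp only [reps, Finset.mem_filter, Finset.mem_powerset] at hS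
  obtain ⟨hsub, _, hsum⟩ := hS
  have hs := sum_fib_lt (B+1) S hsub
  have e : B+1+1 = B+2 := by omega
  rw [e] at hs
  have hpos : 1 ≤ Nat.fib (B+2) := Nat.fib_pos.mpr (by omega)
  omega

lemma reps_one (B : ℕ) (hB : 2 ≤ B) : reps B 1 = {{2}} := by
  ext S
  simp only [reps, Finset.mem_filter, Finset.mem_powerset, Finset.mem_singleton]
  constructor
  · rintro ⟨hsub, h2, hsum⟩
    -- every element has fib ≥ 1, sum = 1 ⇒ exactly one element i with fib i = 1, i ≥ 2 ⇒ i = 2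
    have hne : S.Nonempty := by
      rcases S.eq_empty_or_nonempty with rfl | h
      · simp at hsum
      · exact h
    obtain ⟨i, hi⟩ := hne
    have hfi : Nat.fib i ≤ 1 := by
      have := Finset.single_le_sum (fun j _ => Nat.zero_le (Nat.fib j)) hi
      omega
    have hi2 : 2 ≤ i := h2 i hi
    have : i = 2 := by
      by_contra hc
      have h3 : 3 ≤ i := by omega
      have hmono : Nat.fib 3 ≤ Nat.fib i := Nat.fib_mono h3
      have : Nat.fib 3 = 2 := by decide
      omega
    subst this
    -- now show S = {2}
    have : S = {2} := by
      apply Finset.eq_singleton_iff_unique_mem.mpr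
      refine ⟨hi, ?_⟩
      intro j hj
      by_contra hc
      have hsum2 : Nat.fib 2 + Nat.fib j ≤ ∑ k ∈ S, Nat.fib k := by
        have : ({2, j} : Finset ℕ) ⊆ S := by
          intro x hx
          rcases Finset.mem_insert.mp hx with rfl | hx
          · exact hi
          · rwa [Finset.mem_singleton.mp hx]
        calc Nat.fib 2 + Nat.fib j = ∑ k ∈ ({2, j} : Finset ℕ), Nat.fib k := by
              rw [Finset.sum_insert (by simp [Ne.symm hc]), Finset.sum_singleton]
          _ ≤ _ := Finset.sum_le_sum_of_subset this
      have hj2 : 2 ≤ j := h2 j hj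
      have hjp : 1 ≤ Nat.fib j := Nat.fib_pos.mpr (by omega)
      have h22 : Nat.fib 2 = 1 := by decide
      omega
    exact this
  · rintro rfl
    refine ⟨?_, ?_, ?_⟩
    · intro i hi
      rw [Finset.mem_singleton.mp hi, Finset.mem_range]
      omega
    · intro i hi; rw [Finset.mem_singleton.mp hi]
    · decide

/-- main induction: reps (2k) (fib(2k)+1) has card k-1 -/
lemma reps_main (k : ℕ) (hk : 1 ≤ k) :
    (reps (2*k) (Nat.fib (2*k) + 1)).card = k - 1 := by
  induction k with
  | zero => omega
  | succ k ih =>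
    rcases Nat.eq_or_lt_of_le hk with h | h
    · -- k+1 = 1, i.e. k = 0 : reps 2 2
      have : k = 0 := by omega
      subst this
      decide
    · have hk1 : 1 ≤ k := by omega
      have e : 2*(k+1) = 2*k+2 := by ring
      rw [e]
      set N := Nat.fib (2*k+2) + 1 with hN
      have step1 : (reps (2*k+2) N).card
          = (reps (2*k+1) (N - Nat.fib (2*k+2))).card + (reps (2*k+1) N).card := by
        have := reps_card_split (2*k+2) N (by omega) (by omega)
        simpa using this
      have hr1 : N - Nat.fib (2*k+2) = 1 := by omega
      have step2 : (reps (2*k+1) N).card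
          = (reps (2*k) (N - Nat.fib (2*k+1))).card + (reps (2*k) N).card := by
        have hfle : Nat.fib (2*k+1) ≤ N := by
          have : Nat.fib (2*k+1) ≤ Nat.fib (2*k+2) := Nat.fib_mono (by omega)
          omega
        have := reps_card_split (2*k+1) N (by omega) hfle
        simpa using this
      have hr2 : N - Nat.fib (2*k+1) = Nat.fib (2*k) + 1 := by
        have : Nat.fib (2*k+2) = Nat.fib (2*k) + Nat.fib (2*k+1) := Nat.fib_add_two
        omega
      have hempty : reps (2*k) N = ∅ := by
        apply reps_empty
        omega
      rw [step1, hr1, reps_one _ (by omega), step2, hr2, hempty, ih hk1]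
      simp
      omega

/-- `TotFIB(F_{2n+2} · L_{2n}) = 2n` for all `n ≥ 1`. -/
theorem totFIB_fib_mul_lucas_even (n : ℕ) (hn : 1 ≤ n) :
    TotFIB (Nat.fib (2 * n + 2) * lucasNum (2 * n)) = 2 * n := by
  rw [key_val n hn]
  have h1 : TotFIB (Nat.fib (4*n+2) + 1) = (reps (4*n+2) (Nat.fib (4*n+2) + 1)).card := by
    apply totFIB_eq_reps _ _ (by omega)
    have e : 4*n+2+1 = 4*n+3 := by omega
    rw [e]
    have : Nat.fib (4*n+3) = Nat.fib (4*n+1) + Nat.fib (4*n+2) := Nat.fib_add_two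
    have h2 : 2 ≤ Nat.fib (4*n+1) := by
      have hm : Nat.fib 3 ≤ Nat.fib (4*n+1) := Nat.fib_mono (by omega)
      have : Nat.fib 3 = 2 := by decide
      omega
    omega
  rw [h1]
  have e : 4*n+2 = 2*(2*n+1) := by ring
  rw [e, reps_main (2*n+1) (by omega)]
  omega
end
end

section
/- For every n ≥ 1, TotFIB(F_{2n+2} · L_{2n+1}) = 1. -/
noncomputable section

open Finset

/-- Fibonacci recurrence in a convenient form. -/
lemma fibrec (a : ℕ) : Nat.fib (a + 2) = Nat.fib a + Nat.fib (a + 1) := Nat.fib_add_two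

/-- Auxiliary: sum of Fibonacci numbers over `Icc 2 (k+1)`. -/
lemma sumIccFib (k : ℕ) : (∑ i ∈ Finset.Icc 2 (k + 1), Nat.fib i) + 2 = Nat.fib (k + 3) := by
  induction k with
  | zero => decide
  | succ k ih =>
    show (∑ i ∈ Finset.Icc 2 (k + 2), Nat.fib i) + 2 = Nat.fib (k + 4)
    rw [show k + 2 = k + 1 + 1 from rfl, ← Finset.insert_Icc_right_eq_Icc_add_one (by omega : 2 ≤ k + 1 + 1),
      Finset.sum_insert (by simp)]
    have h1 : Nat.fib (k + 4) = Nat.fib (k + 2) + Nat.fib (k + 3) := fibrec (k + 2)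
    have h0 : Nat.fib (k + 1 + 1) = Nat.fib (k + 2) := rfl
    omega

/-- The canonical representation set. -/
def Erep (m : ℕ) : Finset ℕ := Finset.image (fun j => 2 * j + 2) (Finset.range m)

lemma Erep_ge (m : ℕ) : ∀ i ∈ Erep m, 2 ≤ i := by
  intro i hi
  simp only [Erep, Finset.mem_image] at hi
  obtain ⟨j, _, rfl⟩ := hi
  omega

lemma Erep_not_mem (m : ℕ) : 2 * m + 2 ∉ Erep m := by
  simp only [Erep, Finset.mem_image]
  rintro ⟨j, hj, hje⟩
  simp only [Finset.mem_range] at hj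
  omega

lemma Erep_succ (m : ℕ) : Erep (m + 1) = insert (2 * m + 2) (Erep m) := by
  simp [Erep, Finset.range_add_one, Finset.image_insert]

lemma Erep_sum (m : ℕ) : (∑ i ∈ Erep m, Nat.fib i) + 1 = Nat.fib (2 * m + 1) := by
  induction m with
  | zero => simp [Erep]
  | succ m ih =>
    show (∑ i ∈ Erep (m + 1), Nat.fib i) + 1 = Nat.fib (2 * m + 3)
    rw [Erep_succ, Finset.sum_insert (Erep_not_mem m)]
    have h1 : Nat.fib (2 * m + 3) = Nat.fib (2 * m + 1) + Nat.fib (2 * m + 2) :=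
      fibrec (2 * m + 1)
    omega

/-- Uniqueness of the Fibonacci representation of `fib (2m+1) - 1`. -/
lemma rep_unique : ∀ m : ℕ, ∀ S : Finset ℕ, (∀ i ∈ S, 2 ≤ i) →
    (∑ i ∈ S, Nat.fib i) + 1 = Nat.fib (2 * m + 1) → S = Erep m := by
  intro m
  induction m with
  | zero =>
    intro S h2 hsum
    have hsum' : (∑ i ∈ S, Nat.fib i) = 0 := by
      have h1 : Nat.fib (2 * 0 + 1) = 1 := rfl
      omega
    have hz : ∀ i ∈ S, Nat.fib i = 0 := by
      intro i hi
      have := Finset.single_le_sum (f := Nat.fib) (fun i _ => Nat.zero_le _) hi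
      omega
    have hS : S = ∅ := by
      rw [Finset.eq_empty_iff_forall_notMem]
      intro i hi
      have hf := hz i hi
      have : 0 < Nat.fib i := Nat.fib_pos.2 (by have := h2 i hi; omega)
      omega
    rw [hS]
    rfl
  | succ m ih =>
    intro S h2 hsum
    have hsum' : (∑ i ∈ S, Nat.fib i) + 1 = Nat.fib (2 * m + 3) := hsum
    have hfib3 : Nat.fib (2 * m + 3) = Nat.fib (2 * m + 1) + Nat.fib (2 * m + 2) :=
      fibrec (2 * m + 1)
    -- every element is ≤ 2m+2
    have hub : ∀ i ∈ S, i ≤ 2 * m + 2 := by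
      intro i hi
      by_contra hgt
      have h1 : Nat.fib (2 * m + 3) ≤ Nat.fib i := Nat.fib_mono (by omega)
      have h2' : Nat.fib i ≤ ∑ j ∈ S, Nat.fib j :=
        Finset.single_le_sum (fun j _ => Nat.zero_le _) hi
      omega
    -- 2m+2 ∈ S
    have hmem : 2 * m + 2 ∈ S := by
      by_contra hnot
      have hsub : S ⊆ Finset.Icc 2 (2 * m + 1) := by
        intro i hi
        have ha := h2 i hi
        have hb := hub i hi
        have hc : i ≠ 2 * m + 2 := fun h => hnot (h ▸ hi)
        simp only [Finset.mem_Icc]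
        omega
      have hle : ∑ i ∈ S, Nat.fib i ≤ ∑ i ∈ Finset.Icc 2 (2 * m + 1), Nat.fib i :=
        Finset.sum_le_sum_of_subset hsub
      have hIcc : (∑ i ∈ Finset.Icc 2 (2 * m + 1), Nat.fib i) + 2 = Nat.fib (2 * m + 3) :=
        sumIccFib (2 * m)
      omega
    -- apply IH to S.erase (2m+2)
    have herase : (∑ i ∈ S.erase (2 * m + 2), Nat.fib i) + Nat.fib (2 * m + 2)
        = ∑ i ∈ S, Nat.fib i := by
      rw [Finset.sum_erase_add _ _ hmem]
    have hS' : S.erase (2 * m + 2) = Erep m := by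
      apply ih
      · intro i hi; exact h2 i (Finset.mem_of_mem_erase hi)
      · omega
    rw [Erep_succ, ← hS', Finset.insert_erase hmem]

lemma lucas_eq_fib : ∀ k : ℕ, lucasNum (k + 1) = Nat.fib (k + 2) + Nat.fib k := by
  intro k
  induction k using Nat.strong_induction_on with
  | _ k ih =>
    match k with
    | 0 => decide
    | 1 => decide
    | k + 2 =>
      have h1 : lucasNum (k + 2) = Nat.fib (k + 3) + Nat.fib (k + 1) := ih (k + 1) (by omega)
      have h2 : lucasNum (k + 1) = Nat.fib (k + 2) + Nat.fib k := ih k (by omega)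
      show lucasNum (k + 2) + lucasNum (k + 1) = Nat.fib (k + 4) + Nat.fib (k + 2)
      rw [h1, h2]
      have e1 : Nat.fib (k + 4) = Nat.fib (k + 2) + Nat.fib (k + 3) := fibrec (k + 2)
      have e2 : Nat.fib (k + 3) = Nat.fib (k + 1) + Nat.fib (k + 2) := fibrec (k + 1)
      have e3 : Nat.fib (k + 2) = Nat.fib k + Nat.fib (k + 1) := fibrec k
      omega

lemma cassini_odd : ∀ n : ℕ,
    Nat.fib (2 * n + 1) * Nat.fib (2 * n + 1) = Nat.fib (2 * n + 2) * Nat.fib (2 * n) + 1 := by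
  intro n
  induction n with
  | zero => decide
  | succ n ih =>
    show Nat.fib (2 * n + 3) * Nat.fib (2 * n + 3)
        = Nat.fib (2 * n + 4) * Nat.fib (2 * n + 2) + 1
    have e1 : Nat.fib (2 * n + 2) = Nat.fib (2 * n) + Nat.fib (2 * n + 1) := fibrec (2 * n)
    have e2 : Nat.fib (2 * n + 3) = Nat.fib (2 * n + 1) + Nat.fib (2 * n + 2) :=
      fibrec (2 * n + 1)
    have e3 : Nat.fib (2 * n + 4) = Nat.fib (2 * n + 2) + Nat.fib (2 * n + 3) :=
      fibrec (2 * n + 2)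
    nlinarith [ih, e1, e2, e3]

lemma key_identity (n : ℕ) :
    Nat.fib (2 * n + 2) * lucasNum (2 * n + 1) + 1 = Nat.fib (2 * (2 * n + 1) + 1) := by
  rw [lucas_eq_fib (2 * n)]
  have hadd : Nat.fib (2 * (2 * n + 1) + 1)
      = Nat.fib (2 * n + 1) * Nat.fib (2 * n + 1) + Nat.fib (2 * n + 2) * Nat.fib (2 * n + 2) := by
    have := Nat.fib_add (2 * n + 1) (2 * n + 1)
    have harg : 2 * n + 1 + (2 * n + 1) + 1 = 2 * (2 * n + 1) + 1 := by ring
    rw [harg] at this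
    exact this
  have hc := cassini_odd n
  nlinarith [hadd, hc]

/-- `TotFIB(F_{2n+2} · L_{2n+1}) = 1` for all `n ≥ 1`. -/
theorem totFIB_fib_mul_lucas_odd (n : ℕ) (hn : 1 ≤ n) :
    TotFIB (Nat.fib (2 * n + 2) * lucasNum (2 * n + 1)) = 1 := by
  have hset : {S : Finset ℕ | (∀ i ∈ S, 2 ≤ i) ∧ ∑ i ∈ S, Nat.fib i
      = Nat.fib (2 * n + 2) * lucasNum (2 * n + 1)} = {Erep (2 * n + 1)} := by
    ext S
    simp only [Set.mem_setOf_eq, Set.mem_singleton_iff]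
    constructor
    · rintro ⟨h2, hsum⟩
      exact rep_unique (2 * n + 1) S h2 (by have := key_identity n; omega)
    · rintro rfl
      refine ⟨Erep_ge _, ?_⟩
      have := Erep_sum (2 * n + 1)
      have := key_identity n
      omega
  rw [TotFIB, hset, Set.ncard_singleton]
end
end

section
/- For every n ≥ 1, TotFIB(F_{2n}²) = F_{2n−1}. -/
noncomputable section

open Finset

namespace TFibAux

/-- Representations of `M` as sums of distinct `fib i`, `2 ≤ i < m`. -/
def RS (m M : ℕ) : Set (Finset ℕ) :=
  {S | (∀ i ∈ S, 2 ≤ i ∧ i < m) ∧ ∑ i ∈ S, Nat.fib i = M}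

lemma rs_finite (m M : ℕ) : (RS m M).Finite := by
  apply Set.Finite.subset (Finset.finite_toSet ((Finset.range m).powerset))
  rintro S ⟨h1, -⟩
  simp only [Finset.coe_powerset, Set.mem_preimage, Set.mem_powerset_iff]
  intro i hi
  simp only [Finset.coe_range, Set.mem_Iio]
  exact (h1 i hi).2

lemma fib_gap (a : ℕ) : Nat.fib (a + 2) = Nat.fib (a + 1) + Nat.fib a := by
  rw [Nat.fib_add_two]; exact Nat.add_comm _ _

lemma sum_Ico_fib {m : ℕ} (hm : 2 ≤ m) :
    (∑ i ∈ Finset.Ico 2 m, Nat.fib i) + 2 = Nat.fib (m + 1) := by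
  induction m, hm using Nat.le_induction with
  | base => decide
  | succ k hk ih =>
    rw [Finset.sum_Ico_succ_top hk]
    have h2 := fib_gap k
    have h3 : Nat.fib (k + 1 + 1) = Nat.fib (k + 2) := rfl
    omega

lemma rs_zero {m' m M : ℕ} (he : m' = m + 1) (hm : 2 ≤ m)
    (h : Nat.fib m' < M + 2) : RS m M = ∅ := by
  subst he
  ext S
  simp only [RS, Set.mem_setOf_eq, Set.mem_empty_iff_false, iff_false, not_and]
  intro h1 h2
  have hle : ∑ i ∈ S, Nat.fib i ≤ ∑ i ∈ Finset.Ico 2 m, Nat.fib i := by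
    apply Finset.sum_le_sum_of_subset
    intro i hi
    exact Finset.mem_Ico.2 ⟨(h1 i hi).1, (h1 i hi).2⟩
  have := sum_Ico_fib hm
  omega

lemma rs_stable {m M : ℕ} (h : M < Nat.fib m) : RS (m + 1) M = RS m M := by
  ext S
  constructor
  · rintro ⟨h1, h2⟩
    refine ⟨fun i hi => ⟨(h1 i hi).1, ?_⟩, h2⟩
    rcases lt_or_eq_of_le (Nat.lt_succ_iff.mp (h1 i hi).2) with h' | h'
    · exact h'
    · exfalso
      have hsum : Nat.fib i ≤ ∑ j ∈ S, Nat.fib j :=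
        Finset.single_le_sum (fun _ _ => Nat.zero_le _) hi
      rw [h'] at hsum
      omega
  · rintro ⟨h1, h2⟩
    exact ⟨fun i hi => ⟨(h1 i hi).1, Nat.lt_succ_of_lt (h1 i hi).2⟩, h2⟩

lemma rs_stable' {m m' M : ℕ} (h : m ≤ m') (hM : M < Nat.fib m) : RS m' M = RS m M := by
  induction m', h using Nat.le_induction with
  | base => rfl
  | succ k hk ih =>
    rw [rs_stable (lt_of_lt_of_le hM (Nat.fib_mono hk)), ih]

lemma rs_split {m' m M : ℕ} (he : m' = m + 1) (hm : 2 ≤ m) (h : Nat.fib m ≤ M) :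
    (RS m' M).ncard = (RS m (M - Nat.fib m)).ncard + (RS m M).ncard := by
  subst he
  have hnotmem : ∀ S ∈ RS m (M - Nat.fib m), m ∉ S := by
    rintro S ⟨h1, -⟩ hmem
    exact absurd (h1 m hmem).2 (lt_irrefl m)
  have himg : RS (m + 1) M ∩ {S | m ∈ S} = (insert m) '' (RS m (M - Nat.fib m)) := by
    ext S
    constructor
    · rintro ⟨⟨h1, h2⟩, hmS⟩
      refine ⟨S.erase m, ⟨⟨fun i hi => ?_, ?_⟩, Finset.insert_erase hmS⟩⟩
      · have ha := h1 i (Finset.mem_of_mem_erase hi)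
        have hb := Finset.ne_of_mem_erase hi
        omega
      · have := Finset.add_sum_erase S Nat.fib hmS
        omega
    · rintro ⟨T, ⟨⟨h1, h2⟩, rfl⟩⟩
      have hmT : m ∉ T := fun hmem => absurd (h1 m hmem).2 (lt_irrefl m)
      refine ⟨⟨fun i hi => ?_, ?_⟩, Finset.mem_insert_self m T⟩
      · rcases Finset.mem_insert.mp hi with rfl | hi'
        · omega
        · have := h1 i hi'; omega
      · rw [Finset.sum_insert hmT, h2]
        omega
  have h2' : RS (m + 1) M ∩ {S | m ∉ S} = RS m M := by
    ext S
    constructor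
    · rintro ⟨⟨h1, h2⟩, hmS⟩
      refine ⟨fun i hi => ⟨(h1 i hi).1, ?_⟩, h2⟩
      have ha := (h1 i hi).2
      have hb : i ≠ m := fun hee => hmS (hee ▸ hi)
      omega
    · rintro ⟨h1, h2⟩
      exact ⟨⟨fun i hi => ⟨(h1 i hi).1, Nat.lt_succ_of_lt (h1 i hi).2⟩, h2⟩,
        fun hmem => absurd (h1 m hmem).2 (lt_irrefl m)⟩
  have hunion : RS (m + 1) M = (RS (m + 1) M ∩ {S | m ∈ S}) ∪ (RS (m + 1) M ∩ {S | m ∉ S}) := by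
    rw [← Set.inter_union_distrib_left]
    have : ({S : Finset ℕ | m ∈ S} ∪ {S | m ∉ S}) = Set.univ := by
      ext S; simp [em]
    rw [this, Set.inter_univ]
  have hdisj : Disjoint (RS (m + 1) M ∩ {S | m ∈ S}) (RS (m + 1) M ∩ {S | m ∉ S}) := by
    apply Set.disjoint_left.mpr
    rintro S ⟨-, hS1⟩ ⟨-, hS2⟩
    exact hS2 hS1
  have hfin1 : (RS (m + 1) M ∩ {S | m ∈ S}).Finite :=
    (rs_finite _ _).subset Set.inter_subset_left
  have hfin2 : (RS (m + 1) M ∩ {S | m ∉ S}).Finite :=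
    (rs_finite _ _).subset Set.inter_subset_left
  rw [hunion, Set.ncard_union_eq hdisj hfin1 hfin2, himg, h2']
  congr 1
  apply Set.ncard_image_of_injOn
  intro S hS T hT hIm
  have h1 := hnotmem S hS
  have h2 := hnotmem T hT
  rw [← Finset.erase_insert h1, ← Finset.erase_insert h2, hIm]

end TFibAux
namespace TFibAux

lemma totFIB_eq {m : ℕ} (M : ℕ) (h : M < Nat.fib m) :
    TotFIB M = (RS m M).ncard := by
  unfold TotFIB RS
  congr 1
  ext S
  simp only [Set.mem_setOf_eq]
  constructor
  · rintro ⟨h1, h2⟩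
    refine ⟨fun i hi => ⟨h1 i hi, ?_⟩, h2⟩
    by_contra h'
    push_neg at h'
    have h3 : Nat.fib m ≤ Nat.fib i := Nat.fib_mono h'
    have h4 : Nat.fib i ≤ M := by
      rw [← h2]
      exact Finset.single_le_sum (fun _ _ => Nat.zero_le _) hi
    omega
  · rintro ⟨h1, h2⟩
    exact ⟨fun i hi => (h1 i hi).1, h2⟩

/-- `F_{2k+2} + F_k² = F_{k+2}²`. -/
lemma fib_sq_step (k : ℕ) :
    Nat.fib (2 * k + 2) + Nat.fib k ^ 2 = Nat.fib (k + 2) ^ 2 := by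
  have h1 := Nat.fib_add k (k + 1)
  rw [show k + (k + 1) + 1 = 2 * k + 2 by ring] at h1
  have h2 : Nat.fib (k + 2) = Nat.fib k + Nat.fib (k + 1) := Nat.fib_add_two
  rw [h1, h2]
  ring

/-- `F_{4k+3} = F_{2k+1}² + F_{2k+2}²`. -/
lemma fib_odd_sq (k : ℕ) :
    Nat.fib (4 * k + 3) = Nat.fib (2 * k + 1) ^ 2 + Nat.fib (2 * k + 2) ^ 2 := by
  have h1 := Nat.fib_add (2 * k + 1) (2 * k + 1)
  rw [show 2 * k + 1 + (2 * k + 1) + 1 = 4 * k + 3 by ring] at h1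
  rw [h1, show 2 * k + 1 + 1 = 2 * k + 2 by ring]
  ring

lemma sq_lt (k : ℕ) : Nat.fib (2 * k + 2) ^ 2 < Nat.fib (4 * k + 3) := by
  have h := fib_odd_sq k
  have hp : 0 < Nat.fib (2 * k + 1) := Nat.fib_pos.mpr (by omega)
  nlinarith

lemma rs_two_zero : (RS 2 0).ncard = 1 := by
  have h : RS 2 0 = {(∅ : Finset ℕ)} := by
    ext S
    simp only [RS, Set.mem_setOf_eq, Set.mem_singleton_iff]
    constructor
    · rintro ⟨h1, h2⟩
      ext i
      simp only [Finset.notMem_empty, iff_false]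
      intro hi
      have := h1 i hi
      omega
    · rintro rfl
      exact ⟨by simp, by simp⟩
  rw [h, Set.ncard_singleton]

lemma rs_three_one : (RS 3 1).ncard = 1 := by
  have e : (RS 3 1).ncard = (RS 2 (1 - Nat.fib 2)).ncard + (RS 2 1).ncard :=
    rs_split rfl (by omega) (by decide)
  have z : RS 2 1 = ∅ := rs_zero rfl (by omega) (by decide)
  rw [e, z, Set.ncard_empty, show (1 : ℕ) - Nat.fib 2 = 0 from by decide, rs_two_zero]

lemma key (n : ℕ) :
    (RS (4 * n + 3) (Nat.fib (2 * n + 2) ^ 2)).ncard = Nat.fib (2 * n + 1) ∧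
    (RS (4 * n + 5) (Nat.fib (4 * n + 4) + Nat.fib (2 * n + 2) ^ 2)).ncard
      = Nat.fib (2 * n + 2) := by
  induction n with
  | zero =>
    constructor
    · show (RS 3 (Nat.fib 2 ^ 2)).ncard = Nat.fib 1
      rw [show Nat.fib 2 ^ 2 = 1 from by decide, show Nat.fib 1 = 1 from rfl]
      exact rs_three_one
    · show (RS 5 (Nat.fib 4 + Nat.fib 2 ^ 2)).ncard = Nat.fib 2
      rw [show Nat.fib 4 + Nat.fib 2 ^ 2 = 4 from by decide, show Nat.fib 2 = 1 from rfl]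
      have e1 : (RS 5 4).ncard = (RS 4 (4 - Nat.fib 4)).ncard + (RS 4 4).ncard :=
        rs_split rfl (by omega) (by decide)
      have z1 : RS 4 4 = ∅ := rs_zero rfl (by omega) (by decide)
      have s1 : RS 4 1 = RS 3 1 := rs_stable' (by omega) (by decide)
      rw [e1, z1, Set.ncard_empty, show (4 : ℕ) - Nat.fib 4 = 1 from by decide, s1,
        rs_three_one]
  | succ n ih =>
    obtain ⟨ihA, ihB⟩ := ih
    set X := Nat.fib (2 * n + 2) ^ 2 with hX
    have hXlt : X < Nat.fib (4 * n + 3) := sq_lt n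
    have gap4 : Nat.fib (4 * n + 6) = Nat.fib (4 * n + 5) + Nat.fib (4 * n + 4) := by
      rw [show 4 * n + 6 = 4 * n + 4 + 2 by ring, show 4 * n + 5 = 4 * n + 4 + 1 by ring]
      exact fib_gap _
    have gap5 : Nat.fib (4 * n + 7) = Nat.fib (4 * n + 6) + Nat.fib (4 * n + 5) := by
      rw [show 4 * n + 7 = 4 * n + 5 + 2 by ring, show 4 * n + 6 = 4 * n + 5 + 1 by ring]
      exact fib_gap _
    have gap6 : Nat.fib (4 * n + 8) = Nat.fib (4 * n + 7) + Nat.fib (4 * n + 6) := by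
      rw [show 4 * n + 8 = 4 * n + 6 + 2 by ring, show 4 * n + 7 = 4 * n + 6 + 1 by ring]
      exact fib_gap _
    have mono34 : Nat.fib (4 * n + 3) ≤ Nat.fib (4 * n + 4) := Nat.fib_mono (by omega)
    have mono45 : Nat.fib (4 * n + 4) ≤ Nat.fib (4 * n + 5) := Nat.fib_mono (by omega)
    have hid1 : Nat.fib (2 * n + 4) ^ 2 = Nat.fib (4 * n + 6) + X := by
      have h := fib_sq_step (2 * n + 2)
      rw [show 2 * (2 * n + 2) + 2 = 4 * n + 6 by ring,
        show 2 * n + 2 + 2 = 2 * n + 4 by ring] at h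
      omega
    have hA : (RS (4 * n + 7) (Nat.fib (4 * n + 6) + X)).ncard = Nat.fib (2 * n + 3) := by
      have e1 : (RS (4 * n + 7) (Nat.fib (4 * n + 6) + X)).ncard
          = (RS (4 * n + 6) (Nat.fib (4 * n + 6) + X - Nat.fib (4 * n + 6))).ncard
            + (RS (4 * n + 6) (Nat.fib (4 * n + 6) + X)).ncard :=
        rs_split (by ring) (by omega) (Nat.le_add_right _ _)
      rw [Nat.add_sub_cancel_left] at e1
      have s1 : RS (4 * n + 6) X = RS (4 * n + 3) X := rs_stable' (by omega) hXlt
      have e2 : (RS (4 * n + 6) (Nat.fib (4 * n + 6) + X)).ncard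
          = (RS (4 * n + 5) (Nat.fib (4 * n + 6) + X - Nat.fib (4 * n + 5))).ncard
            + (RS (4 * n + 5) (Nat.fib (4 * n + 6) + X)).ncard :=
        rs_split (by ring) (by omega) (by omega)
      rw [show Nat.fib (4 * n + 6) + X - Nat.fib (4 * n + 5)
        = Nat.fib (4 * n + 4) + X from by omega] at e2
      have z1 : RS (4 * n + 5) (Nat.fib (4 * n + 6) + X) = ∅ :=
        rs_zero (m' := 4 * n + 6) (by ring) (by omega) (by omega)
      rw [e1, s1, ihA, e2, ihB, z1, Set.ncard_empty]
      have hf : Nat.fib (2 * n + 3) = Nat.fib (2 * n + 2) + Nat.fib (2 * n + 1) := by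
        rw [show 2 * n + 3 = 2 * n + 1 + 2 by ring, show 2 * n + 2 = 2 * n + 1 + 1 by ring]
        exact fib_gap _
      omega
    constructor
    · rw [show 4 * (n + 1) + 3 = 4 * n + 7 by ring,
        show 2 * (n + 1) + 2 = 2 * n + 4 by ring,
        show 2 * (n + 1) + 1 = 2 * n + 3 by ring, hid1]
      exact hA
    · rw [show 4 * (n + 1) + 5 = 4 * n + 9 by ring,
        show 4 * (n + 1) + 4 = 4 * n + 8 by ring,
        show 2 * (n + 1) + 2 = 2 * n + 4 by ring, hid1]
      have e1 : (RS (4 * n + 9) (Nat.fib (4 * n + 8) + (Nat.fib (4 * n + 6) + X))).ncard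
          = (RS (4 * n + 8) (Nat.fib (4 * n + 8) + (Nat.fib (4 * n + 6) + X)
              - Nat.fib (4 * n + 8))).ncard
            + (RS (4 * n + 8) (Nat.fib (4 * n + 8) + (Nat.fib (4 * n + 6) + X))).ncard :=
        rs_split (by ring) (by omega) (Nat.le_add_right _ _)
      rw [Nat.add_sub_cancel_left] at e1
      have hlt2 : Nat.fib (4 * n + 6) + X < Nat.fib (4 * n + 7) := by omega
      have s1 : RS (4 * n + 8) (Nat.fib (4 * n + 6) + X)
          = RS (4 * n + 7) (Nat.fib (4 * n + 6) + X) := rs_stable' (by omega) hlt2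
      have e2 : (RS (4 * n + 8) (Nat.fib (4 * n + 8) + (Nat.fib (4 * n + 6) + X))).ncard
          = (RS (4 * n + 7) (Nat.fib (4 * n + 8) + (Nat.fib (4 * n + 6) + X)
              - Nat.fib (4 * n + 7))).ncard
            + (RS (4 * n + 7) (Nat.fib (4 * n + 8) + (Nat.fib (4 * n + 6) + X))).ncard :=
        rs_split (by ring) (by omega) (by omega)
      rw [show Nat.fib (4 * n + 8) + (Nat.fib (4 * n + 6) + X) - Nat.fib (4 * n + 7)
        = 2 * Nat.fib (4 * n + 6) + X from by omega] at e2
      have z1 : RS (4 * n + 7) (Nat.fib (4 * n + 8) + (Nat.fib (4 * n + 6) + X)) = ∅ :=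
        rs_zero (m' := 4 * n + 8) (by ring) (by omega) (by omega)
      have e3 : (RS (4 * n + 7) (2 * Nat.fib (4 * n + 6) + X)).ncard
          = (RS (4 * n + 6) (2 * Nat.fib (4 * n + 6) + X - Nat.fib (4 * n + 6))).ncard
            + (RS (4 * n + 6) (2 * Nat.fib (4 * n + 6) + X)).ncard :=
        rs_split (by ring) (by omega) (by omega)
      rw [show 2 * Nat.fib (4 * n + 6) + X - Nat.fib (4 * n + 6)
        = Nat.fib (4 * n + 6) + X from by omega] at e3
      have z2 : RS (4 * n + 6) (2 * Nat.fib (4 * n + 6) + X) = ∅ := by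
        apply rs_zero (m' := 4 * n + 7) (by ring) (by omega)
        have hp : 0 < Nat.fib (4 * n + 6) := Nat.fib_pos.mpr (by omega)
        omega
      have e4 : (RS (4 * n + 6) (Nat.fib (4 * n + 6) + X)).ncard
          = (RS (4 * n + 5) (Nat.fib (4 * n + 6) + X - Nat.fib (4 * n + 5))).ncard
            + (RS (4 * n + 5) (Nat.fib (4 * n + 6) + X)).ncard :=
        rs_split (by ring) (by omega) (by omega)
      rw [show Nat.fib (4 * n + 6) + X - Nat.fib (4 * n + 5)
        = Nat.fib (4 * n + 4) + X from by omega] at e4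
      have z3 : RS (4 * n + 5) (Nat.fib (4 * n + 6) + X) = ∅ :=
        rs_zero (m' := 4 * n + 6) (by ring) (by omega) (by omega)
      rw [e1, s1, hA, e2, z1, e3, z2, e4, z3, ihB, Set.ncard_empty]
      have hf : Nat.fib (2 * n + 4) = Nat.fib (2 * n + 3) + Nat.fib (2 * n + 2) := by
        rw [show 2 * n + 4 = 2 * n + 2 + 2 by ring, show 2 * n + 3 = 2 * n + 2 + 1 by ring]
        exact fib_gap _
      omega

end TFibAux

/-- `TotFIB(F_{2n}²) = F_{2n-1}` for all `n ≥ 1`. -/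
theorem totFIB_fib_sq_even (n : ℕ) (hn : 1 ≤ n) :
    TotFIB (Nat.fib (2 * n) ^ 2) = Nat.fib (2 * n - 1) := by
  obtain ⟨m, rfl⟩ : ∃ m, n = m + 1 := ⟨n - 1, by omega⟩
  rw [show 2 * (m + 1) = 2 * m + 2 by ring, show 2 * m + 2 - 1 = 2 * m + 1 by omega]
  rw [TFibAux.totFIB_eq (m := 4 * m + 3) _ (TFibAux.sq_lt m)]
  exact (TFibAux.key m).1
end
end

section
/- For every n ≥ 1, TotFIB(F_{2n+1}² − 2) = F_{2n}. -/
noncomputable section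

open Finset

/-- number of subsets of `Icc 2 t` whose fib-sum is `N`. -/
def rcount (N t : ℕ) : ℕ :=
  ((Icc 2 t).powerset.filter (fun S => ∑ i ∈ S, Nat.fib i = N)).card

lemma sum_fib_Icc (t : ℕ) (ht : 1 ≤ t) :
    (∑ i ∈ Icc 2 t, Nat.fib i) + 2 = Nat.fib (t + 2) := by
  induction t with
  | zero => omega
  | succ k ih =>
    rcases Nat.lt_or_ge k 1 with h | h
    · interval_cases k
      decide
    · have h2 : (2 : ℕ) ≤ k + 1 := by omega
      rw [Finset.sum_Icc_succ_top h2]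
      have h3 : Nat.fib (k + 1 + 2) = Nat.fib (k + 1) + Nat.fib (k + 2) := Nat.fib_add_two
      have := ih h
      omega

lemma rcount_decomp (N t : ℕ) (ht : 1 ≤ t) :
    rcount N (t + 1) = rcount N t +
      ((Icc 2 t).powerset.filter
        (fun S => Nat.fib (t + 1) + ∑ i ∈ S, Nat.fib i = N)).card := by
  have hins : Icc 2 (t + 1) = insert (t + 1) (Icc 2 t) := by
    ext x; simp [Finset.mem_Icc, Finset.mem_insert]; omega
  have hnm : (t + 1) ∉ Icc 2 t := by simp [Finset.mem_Icc]
  unfold rcount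
  rw [hins, Finset.powerset_insert, Finset.filter_union]
  rw [Finset.card_union_of_disjoint]
  · congr 1
    rw [Finset.filter_image]
    rw [Finset.card_image_of_injOn]
    · congr 1
      apply Finset.filter_congr
      intro S hS
      simp only [Finset.mem_powerset] at hS
      have h1 : (t+1) ∉ S := fun h => hnm (hS h)
      rw [Finset.sum_insert h1]
    · intro S hS S' hS' hEq
      simp only [Finset.coe_filter, Set.mem_setOf_eq, Finset.mem_powerset] at hS hS'
      have h1 : (t+1) ∉ S := fun h => hnm (hS.1 h)
      have h2 : (t+1) ∉ S' := fun h => hnm (hS'.1 h)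
      have := congrArg (fun X => Finset.erase X (t+1)) hEq
      simpa [Finset.erase_insert, h1, h2] using this
  · rw [Finset.disjoint_left]
    intro S hS hS'
    simp only [Finset.mem_filter, Finset.mem_powerset, Finset.mem_image] at hS hS'
    obtain ⟨⟨S', hS', rfl⟩, -⟩ := hS'
    exact hnm (hS.1 (Finset.mem_insert_self _ _))

lemma rcount_succ_le (N t : ℕ) (ht : 1 ≤ t) (h : Nat.fib (t + 1) ≤ N) :
    rcount N (t + 1) = rcount N t + rcount (N - Nat.fib (t + 1)) t := by
  rw [rcount_decomp N t ht]
  congr 1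
  unfold rcount
  congr 1
  apply Finset.filter_congr
  intro S _
  constructor <;> intro hS <;> omega

lemma rcount_succ_gt (N t : ℕ) (ht : 1 ≤ t) (h : N < Nat.fib (t + 1)) :
    rcount N (t + 1) = rcount N t := by
  rw [rcount_decomp N t ht]
  have : ((Icc 2 t).powerset.filter
      (fun S => Nat.fib (t + 1) + ∑ i ∈ S, Nat.fib i = N)).card = 0 := by
    rw [Finset.card_eq_zero, Finset.filter_eq_empty_iff]
    intro S _
    omega
  omega

lemma rcount_eq_zero (N t : ℕ) (ht : 1 ≤ t) (h : Nat.fib (t + 2) < N + 2) :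
    rcount N t = 0 := by
  unfold rcount
  rw [Finset.card_eq_zero, Finset.filter_eq_empty_iff]
  intro S hS
  simp only [Finset.mem_powerset] at hS
  have hle : ∑ i ∈ S, Nat.fib i ≤ ∑ i ∈ Icc 2 t, Nat.fib i :=
    Finset.sum_le_sum_of_subset hS
  have := sum_fib_Icc t ht
  omega

lemma totFIB_eq_rcount (N t : ℕ) (h : N < Nat.fib (t + 1)) :
    TotFIB N = rcount N t := by
  have hset : {S : Finset ℕ | (∀ i ∈ S, 2 ≤ i) ∧ ∑ i ∈ S, Nat.fib i = N} =
      ↑((Icc 2 t).powerset.filter (fun S => ∑ i ∈ S, Nat.fib i = N)) := by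
    ext S
    simp only [Set.mem_setOf_eq, Finset.coe_filter, Finset.mem_powerset]
    constructor
    · rintro ⟨h2, hsum⟩
      refine ⟨fun i hi => Finset.mem_Icc.2 ⟨h2 i hi, ?_⟩, hsum⟩
      by_contra hc
      push_neg at hc
      have h1 : Nat.fib (t + 1) ≤ Nat.fib i := Nat.fib_mono hc
      have h2' : Nat.fib i ≤ ∑ j ∈ S, Nat.fib j :=
        Finset.single_le_sum (fun j _ => Nat.zero_le _) hi
      omega
    · rintro ⟨hsub, hsum⟩
      exact ⟨fun i hi => (Finset.mem_Icc.1 (hsub hi)).1, hsum⟩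
  rw [TotFIB, hset, Set.ncard_coe_finset, rcount]

lemma rcount_step (A t T P : ℕ) (ht : 1 ≤ t)
    (hT : rcount A (t + 1) = T) (hP : rcount A t = P)
    (c1 : A + 2 ≤ Nat.fib (t + 2)) (c3 : Nat.fib t ≤ A + 1) :
    rcount (A + Nat.fib (t + 5)) (t + 5) = T + T + P ∧
    rcount (A + Nat.fib (t + 5)) (t + 4) = T + P := by
  have hf2 : Nat.fib (t + 2) = Nat.fib t + Nat.fib (t + 1) := Nat.fib_add_two
  have hf3 : Nat.fib (t + 3) = Nat.fib (t + 1) + Nat.fib (t + 2) := Nat.fib_add_two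
  have hf4 : Nat.fib (t + 4) = Nat.fib (t + 2) + Nat.fib (t + 3) := Nat.fib_add_two
  have hf5 : Nat.fib (t + 5) = Nat.fib (t + 3) + Nat.fib (t + 4) := Nat.fib_add_two
  -- stability for A at levels t+2, t+3, t+4
  have s1 : rcount A (t + 2) = rcount A (t + 1) :=
    rcount_succ_gt A (t + 1) (by omega)
      (show A < Nat.fib (t + 2) by omega)
  have s2 : rcount A (t + 3) = rcount A (t + 2) :=
    rcount_succ_gt A (t + 2) (by omega)
      (show A < Nat.fib (t + 3) by omega)
  have s3 : rcount A (t + 4) = rcount A (t + 3) :=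
    rcount_succ_gt A (t + 3) (by omega)
      (show A < Nat.fib (t + 4) by omega)
  -- split at top level t+5
  have ea : rcount (A + Nat.fib (t + 5)) (t + 5) =
      rcount (A + Nat.fib (t + 5)) (t + 4) +
      rcount (A + Nat.fib (t + 5) - Nat.fib (t + 5)) (t + 4) :=
    rcount_succ_le _ (t + 4) (by omega)
      (show Nat.fib (t + 5) ≤ A + Nat.fib (t + 5) by omega)
  have ea' : A + Nat.fib (t + 5) - Nat.fib (t + 5) = A := by omega
  rw [ea'] at ea
  -- split at level t+4
  have ec : rcount (A + Nat.fib (t + 5)) (t + 4) =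
      rcount (A + Nat.fib (t + 5)) (t + 3) +
      rcount (A + Nat.fib (t + 5) - Nat.fib (t + 4)) (t + 3) :=
    rcount_succ_le _ (t + 3) (by omega)
      (show Nat.fib (t + 4) ≤ A + Nat.fib (t + 5) by omega)
  have ec' : A + Nat.fib (t + 5) - Nat.fib (t + 4) = A + Nat.fib (t + 3) := by omega
  rw [ec'] at ec
  have ec0 : rcount (A + Nat.fib (t + 5)) (t + 3) = 0 :=
    rcount_eq_zero _ (t + 3) (by omega)
      (show Nat.fib (t + 5) < A + Nat.fib (t + 5) + 2 by omega)
  -- split at level t+3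
  have ed : rcount (A + Nat.fib (t + 3)) (t + 3) =
      rcount (A + Nat.fib (t + 3)) (t + 2) +
      rcount (A + Nat.fib (t + 3) - Nat.fib (t + 3)) (t + 2) :=
    rcount_succ_le _ (t + 2) (by omega)
      (show Nat.fib (t + 3) ≤ A + Nat.fib (t + 3) by omega)
  have ed' : A + Nat.fib (t + 3) - Nat.fib (t + 3) = A := by omega
  rw [ed'] at ed
  -- split at level t+2
  have ee : rcount (A + Nat.fib (t + 3)) (t + 2) =
      rcount (A + Nat.fib (t + 3)) (t + 1) +
      rcount (A + Nat.fib (t + 3) - Nat.fib (t + 2)) (t + 1) :=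
    rcount_succ_le _ (t + 1) (by omega)
      (show Nat.fib (t + 2) ≤ A + Nat.fib (t + 3) by omega)
  have ee' : A + Nat.fib (t + 3) - Nat.fib (t + 2) = A + Nat.fib (t + 1) := by omega
  rw [ee'] at ee
  have ee0 : rcount (A + Nat.fib (t + 3)) (t + 1) = 0 :=
    rcount_eq_zero _ (t + 1) (by omega)
      (show Nat.fib (t + 3) < A + Nat.fib (t + 3) + 2 by omega)
  -- split at level t+1
  have ef : rcount (A + Nat.fib (t + 1)) (t + 1) =
      rcount (A + Nat.fib (t + 1)) t +
      rcount (A + Nat.fib (t + 1) - Nat.fib (t + 1)) t :=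
    rcount_succ_le _ t ht
      (show Nat.fib (t + 1) ≤ A + Nat.fib (t + 1) by omega)
  have ef' : A + Nat.fib (t + 1) - Nat.fib (t + 1) = A := by omega
  rw [ef'] at ef
  have ef0 : rcount (A + Nat.fib (t + 1)) t = 0 :=
    rcount_eq_zero _ t ht
      (show Nat.fib (t + 2) < A + Nat.fib (t + 1) + 2 by omega)
  constructor <;> omega

lemma rcount_key (j : ℕ) :
    rcount (Nat.fib (2 * j + 3) ^ 2 - 2) (4 * j + 4) = Nat.fib (2 * j + 2) ∧
    rcount (Nat.fib (2 * j + 3) ^ 2 - 2) (4 * j + 3) = Nat.fib (2 * j + 1) := by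
  induction j with
  | zero => decide
  | succ k ih =>
    obtain ⟨hT, hP⟩ := ih
    have ha : 1 ≤ Nat.fib (2 * k + 1) := Nat.fib_pos.2 (by omega)
    have hb : 1 ≤ Nat.fib (2 * k + 2) := Nat.fib_pos.2 (by omega)
    have hc3 : Nat.fib (2 * k + 3) = Nat.fib (2 * k + 1) + Nat.fib (2 * k + 2) :=
      Nat.fib_add_two
    have hc4 : Nat.fib (2 * k + 4) = Nat.fib (2 * k + 2) + Nat.fib (2 * k + 3) :=
      Nat.fib_add_two
    have hc5 : Nat.fib (2 * k + 5) = Nat.fib (2 * k + 3) + Nat.fib (2 * k + 4) :=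
      Nat.fib_add_two
    -- F(4k+8) = F(2k+3)F(2k+4) + F(2k+4)F(2k+5)
    have hG8 : Nat.fib (4 * k + 8) =
        Nat.fib (2 * k + 3) * Nat.fib (2 * k + 4) +
        Nat.fib (2 * k + 4) * Nat.fib (2 * k + 5) := by
      have h := Nat.fib_add (2 * k + 3) (2 * k + 4)
      have : 2 * k + 3 + (2 * k + 4) + 1 = 4 * k + 8 := by ring
      rw [this] at h
      have h4 : 2 * k + 3 + 1 = 2 * k + 4 := by ring
      rw [h4] at h
      have h5 : 2 * k + 4 + 1 = 2 * k + 5 := by ring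
      rw [h5] at h
      linarith [h]
    -- F(4k+5) = F(2k+2)^2 + F(2k+3)^2
    have hG5 : Nat.fib (4 * k + 5) =
        Nat.fib (2 * k + 2) * Nat.fib (2 * k + 2) +
        Nat.fib (2 * k + 3) * Nat.fib (2 * k + 3) := by
      have h := Nat.fib_add (2 * k + 2) (2 * k + 2)
      have : 2 * k + 2 + (2 * k + 2) + 1 = 4 * k + 5 := by ring
      rw [this] at h
      have h3 : 2 * k + 2 + 1 = 2 * k + 3 := by ring
      rw [h3] at h
      linarith [h]
    -- F(4k+3) = F(2k+1)^2 + F(2k+2)^2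
    have hG3 : Nat.fib (4 * k + 3) =
        Nat.fib (2 * k + 1) * Nat.fib (2 * k + 1) +
        Nat.fib (2 * k + 2) * Nat.fib (2 * k + 2) := by
      have h := Nat.fib_add (2 * k + 1) (2 * k + 1)
      have : 2 * k + 1 + (2 * k + 1) + 1 = 4 * k + 3 := by ring
      rw [this] at h
      have h2 : 2 * k + 1 + 1 = 2 * k + 2 := by ring
      rw [h2] at h
      linarith [h]
    -- the key identity: F(2k+5)^2 = F(2k+3)^2 + F(4k+8)
    have hsq : Nat.fib (2 * k + 5) * Nat.fib (2 * k + 5) =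
        Nat.fib (2 * k + 3) * Nat.fib (2 * k + 3) + Nat.fib (4 * k + 8) := by
      rw [hG8, hc5, hc4]
      ring
    -- abbreviations
    set a := Nat.fib (2 * k + 1) with hadef
    set b := Nat.fib (2 * k + 2) with hbdef
    set c := Nat.fib (2 * k + 3) with hcdef
    -- A = c^2 - 2
    have hcsq : Nat.fib (2 * k + 3) ^ 2 = c * c := by rw [sq]
    have hcc : 2 ≤ c * c := by nlinarith
    -- c1 : A + 2 ≤ F(4k+5)
    have c1 : (c * c - 2) + 2 ≤ Nat.fib ((4 * k + 3) + 2) := by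
      have : Nat.fib (4 * k + 5) = b * b + c * c := hG5
      have h45 : (4 * k + 3) + 2 = 4 * k + 5 := by ring
      rw [h45, this]
      omega
    -- c3 : F(4k+3) ≤ A + 1
    have c3 : Nat.fib (4 * k + 3) ≤ (c * c - 2) + 1 := by
      have hab : 0 < a * b := Nat.mul_pos ha hb
      have key : a * a + b * b + 1 ≤ c * c := by
        have hc : c = a + b := hc3
        rw [hc]
        have hexp : (a + b) * (a + b) = a * a + b * b + 2 * (a * b) := by ring
        omega
      omega
    have step := rcount_step (c * c - 2) (4 * k + 3) (Nat.fib (2 * k + 2)) (Nat.fib (2 * k + 1))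
      (by omega)
      (by rw [← hcsq] at *; exact (show rcount (Nat.fib (2*k+3)^2 - 2) ((4*k+3)+1) = Nat.fib (2*k+2) from hT))
      (by rw [← hcsq] at *; exact hP)
      c1 c3
    obtain ⟨st1, st2⟩ := step
    -- now rewrite the goal
    have hN : c * c - 2 + Nat.fib ((4 * k + 3) + 5) = Nat.fib (2 * (k+1) + 3) ^ 2 - 2 := by
      have h48 : (4 * k + 3) + 5 = 4 * k + 8 := by ring
      have h25 : 2 * (k + 1) + 3 = 2 * k + 5 := by ring
      rw [h48, h25, sq]
      omega
    rw [hN] at st1 st2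
    have hi1 : (4 * k + 3) + 5 = 4 * (k + 1) + 4 := by ring
    have hi2 : (4 * k + 3) + 4 = 4 * (k + 1) + 3 := by ring
    rw [hi1] at st1
    rw [hi2] at st2
    constructor
    · rw [st1]
      have h22 : 2 * (k + 1) + 2 = 2 * k + 4 := by ring
      rw [h22, hc4]
      have hc : c = a + b := hc3
      omega
    · rw [st2]
      have h23 : 2 * (k + 1) + 1 = 2 * k + 3 := by ring
      rw [h23, ← hcdef]
      have hc : c = a + b := hc3
      omega

/-- `TotFIB(F_{2n+1}² − 2) = F_{2n}` for all `n ≥ 1`. -/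
theorem totFIB_fib_sq_odd_sub_two (n : ℕ) (hn : 1 ≤ n) :
    TotFIB (Nat.fib (2 * n + 1) ^ 2 - 2) = Nat.fib (2 * n) := by
  obtain ⟨j, rfl⟩ : ∃ j, n = j + 1 := ⟨n - 1, by omega⟩
  have h1 : 2 * (j + 1) + 1 = 2 * j + 3 := by ring
  have h2 : 2 * (j + 1) = 2 * j + 2 := by ring
  rw [h1, h2]
  obtain ⟨hT, -⟩ := rcount_key j
  have hG5 : Nat.fib (4 * j + 5) =
      Nat.fib (2 * j + 2) * Nat.fib (2 * j + 2) +
      Nat.fib (2 * j + 3) * Nat.fib (2 * j + 3) := by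
    have h := Nat.fib_add (2 * j + 2) (2 * j + 2)
    have e1 : 2 * j + 2 + (2 * j + 2) + 1 = 4 * j + 5 := by ring
    rw [e1] at h
    have e2 : 2 * j + 2 + 1 = 2 * j + 3 := by ring
    rw [e2] at h
    linarith [h]
  have hlt : Nat.fib (2 * j + 3) ^ 2 - 2 < Nat.fib ((4 * j + 4) + 1) := by
    have e3 : (4 * j + 4) + 1 = 4 * j + 5 := by ring
    have hsq : Nat.fib (2 * j + 3) ^ 2 =
        Nat.fib (2 * j + 3) * Nat.fib (2 * j + 3) := sq _
    have hb : 0 < Nat.fib (2 * j + 2) := Nat.fib_pos.2 (by omega)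
    have hc : 0 < Nat.fib (2 * j + 3) := Nat.fib_pos.2 (by omega)
    have hbb : 0 < Nat.fib (2 * j + 2) * Nat.fib (2 * j + 2) := Nat.mul_pos hb hb
    have hcc : 0 < Nat.fib (2 * j + 3) * Nat.fib (2 * j + 3) := Nat.mul_pos hc hc
    rw [e3, hG5]
    omega
  rw [totFIB_eq_rcount _ (4 * j + 4) hlt]
  exact hT
end
end

section
/- For every natural number s, the number of functions a : ℤ → ℕ with a(i) ≤ 1 for all i, a(i) = 0 whenever i < 0 or i > s, and ∑_{i=0}^{s} a(i)·φ^i = φ^s (as real numbers), equals ⌊s/2⌋ + 1. -/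
noncomputable section

open Finset

lemma phi_gt_one : 1 < goldenPhi := by
  unfold goldenPhi
  nlinarith [Real.sq_sqrt (by norm_num : (5:ℝ) ≥ 0), Real.sqrt_nonneg 5]

lemma phi_zpow_pos (i : ℤ) : 0 < goldenPhi ^ i := zpow_pos phi_pos i

lemma phi_step (i : ℤ) : goldenPhi ^ (i+2) = goldenPhi ^ (i+1) + goldenPhi ^ i := by
  have h1 : goldenPhi ^ (i+2) = goldenPhi ^ i * goldenPhi ^ (2:ℕ) := by
    rw [← zpow_natCast goldenPhi 2, ← zpow_add₀ phi_ne]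
    norm_num
  have h2 : goldenPhi ^ (i+1) = goldenPhi ^ i * goldenPhi := by
    rw [zpow_add_one₀ phi_ne]
  rw [h1, h2, phi_sq]; ring

lemma Icc_succ (n : ℤ) (hn : 0 ≤ n) :
    Finset.Icc (0:ℤ) (n+1) = insert (n+1) (Finset.Icc 0 n) := by
  ext x; simp only [Finset.mem_Icc, Finset.mem_insert]; omega

lemma notMem_Icc_succ (n : ℤ) : n+1 ∉ Finset.Icc (0:ℤ) n := by
  simp [Finset.mem_Icc]

lemma sum_bound (a : ℤ → ℕ) (h : ∀ i, a i ≤ 1) :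
    ∀ n : ℕ, ∑ i ∈ Finset.Icc (0:ℤ) (n:ℤ), (a i:ℝ) * goldenPhi ^ i
      ≤ goldenPhi ^ ((n:ℤ)+2) - goldenPhi := by
  intro n; induction n with
  | zero =>
    simp only [Nat.cast_zero, Finset.Icc_self, Finset.sum_singleton]
    have h0 : (a 0 : ℝ) ≤ 1 := by exact_mod_cast h 0
    have := phi_step 0
    have hz : goldenPhi ^ (0:ℤ) = 1 := zpow_zero _
    have hone : goldenPhi ^ ((0:ℤ)+1) = goldenPhi := by
      rw [zpow_add_one₀ phi_ne, zpow_zero]; ring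
    rw [this, hone, hz]
    linarith
  | succ n ih =>
    have hc : ((n+1:ℕ):ℤ) = (n:ℤ)+1 := by push_cast; ring
    rw [hc, Icc_succ _ (by positivity), Finset.sum_insert (notMem_Icc_succ n)]
    have hterm : (a ((n:ℤ)+1) : ℝ) * goldenPhi ^ ((n:ℤ)+1) ≤ goldenPhi ^ ((n:ℤ)+1) := by
      have : (a ((n:ℤ)+1) : ℝ) ≤ 1 := by exact_mod_cast h _
      nlinarith [phi_zpow_pos ((n:ℤ)+1)]
    have hs := phi_step ((n:ℤ)+1)
    have hs' : ((n:ℤ)+1)+2 = ((n:ℤ)+1)+2 := rfl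
    have hgoal : goldenPhi ^ (((n:ℤ)+1)+2) = goldenPhi ^ (((n:ℤ)+1)+1) + goldenPhi ^ ((n:ℤ)+1) := phi_step _
    have hrw : goldenPhi ^ (((n:ℤ)+1)+1) = goldenPhi ^ ((n:ℤ)+2) := by
      rw [show ((n:ℤ)+1)+1 = (n:ℤ)+2 by ring]
    rw [hrw] at hgoal
    linarith

def repFun (s k : ℕ) : ℤ → ℕ := fun i =>
  if i = (s:ℤ) - 2*k ∨ ((s:ℤ) - 2*k < i ∧ i < (s:ℤ) ∧ ((s:ℤ) - i) % 2 = 1) then 1 else 0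

lemma repFun_le (s k : ℕ) (i : ℤ) : repFun s k i ≤ 1 := by
  unfold repFun; split_ifs <;> omega

lemma repFun_injective (s : ℕ) : Function.Injective (repFun s) := by
  intro k k' h
  by_contra hne
  wlog hlt : k < k' generalizing k k'
  · exact this h.symm (Ne.symm hne) (by omega)
  have h1 : repFun s k' ((s:ℤ) - 2*k') = 1 := by
    unfold repFun; split_ifs with hc
    · rfl
    · exact absurd (Or.inl rfl) hc
  have h2 : repFun s k ((s:ℤ) - 2*k') = 0 := by
    unfold repFun; split_ifs with hc
    · exfalso; rcases hc with hc | hc <;> omega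
    · rfl
  rw [h] at h2
  omega

lemma repFun_step (s k : ℕ) (i : ℤ) (hi : i ≠ (s:ℤ)+1) (hi2 : i ≠ (s:ℤ)+2) :
    repFun (s+2) (k+1) i = repFun s k i := by
  unfold repFun
  push_cast
  split_ifs <;> omega

lemma Icc_split2 (n : ℤ) (hn : 0 ≤ n) :
    Finset.Icc (0:ℤ) (n+2) = insert (n+2) (insert (n+1) (Finset.Icc 0 n)) := by
  ext x; simp only [Finset.mem_Icc, Finset.mem_insert]; omega

lemma nm1 (n : ℤ) : n+2 ∉ insert (n+1) (Finset.Icc (0:ℤ) n) := by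
  simp only [Finset.mem_insert, Finset.mem_Icc]
  omega

lemma term_nonneg (a : ℤ → ℕ) (i : ℤ) : (0:ℝ) ≤ (a i:ℝ) * goldenPhi ^ i :=
  mul_nonneg (Nat.cast_nonneg _) (le_of_lt (phi_zpow_pos _))

def ASet (s : ℕ) : Set (ℤ → ℕ) :=
  {a : ℤ → ℕ | (∀ i, a i ≤ 1) ∧
    (∀ i : ℤ, i < 0 ∨ (s : ℤ) < i → a i = 0) ∧
    ∑ i ∈ Finset.Icc (0 : ℤ) (s : ℤ), (a i : ℝ) * goldenPhi ^ i = goldenPhi ^ (s : ℤ)}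

lemma key_s19 : ∀ s : ℕ, ASet s = repFun s '' Set.Iic (s/2) := by
  intro s
  induction s using Nat.strong_induction_on with
  | _ s ih =>
  match s, ih with
  | 0, ih =>
    ext a
    simp only [ASet, Set.mem_setOf_eq, Set.mem_image, Set.mem_Iic]
    constructor
    · rintro ⟨h1, h2, h3⟩
      simp only [Nat.cast_zero, Finset.Icc_self, Finset.sum_singleton, zpow_zero,
        mul_one] at h3
      have ha0 : a 0 = 1 := by exact_mod_cast h3
      refine ⟨0, le_refl _, ?_⟩
      funext i
      unfold repFun
      push_cast
      split_ifs with hc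
      · have hi : i = 0 := by omega
        rw [hi, ha0]
      · have hi : i ≠ 0 := by omega
        exact (h2 i (by omega)).symm
    · rintro ⟨k, hk, rfl⟩
      have hk0 : k = 0 := by omega
      subst hk0
      refine ⟨repFun_le _ _, fun i hi => ?_, ?_⟩
      · unfold repFun
        push_cast at hi ⊢
        rw [if_neg (by omega)]
      · simp only [Nat.cast_zero, Finset.Icc_self, Finset.sum_singleton, zpow_zero, mul_one]
        have : repFun 0 0 0 = 1 := by unfold repFun; rw [if_pos (by omega)]
        rw [this]; norm_num
  | 1, ih =>
    have hIcc : Finset.Icc (0:ℤ) 1 = {0, 1} := by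
      ext x; simp only [Finset.mem_Icc, Finset.mem_insert, Finset.mem_singleton]; omega
    have hsum : ∀ a : ℤ → ℕ, ∑ i ∈ Finset.Icc (0:ℤ) 1, (a i:ℝ) * goldenPhi ^ i
        = (a 0:ℝ) + (a 1:ℝ) * goldenPhi := by
      intro a
      rw [hIcc, Finset.sum_insert (by norm_num), Finset.sum_singleton, zpow_zero, zpow_one]
      ring
    ext a
    simp only [ASet, Set.mem_setOf_eq, Set.mem_image, Set.mem_Iic]
    constructor
    · rintro ⟨h1, h2, h3⟩
      rw [show ((1:ℕ):ℤ) = 1 by norm_num] at h3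
      rw [hsum, zpow_one] at h3
      have ha1 : a 1 = 1 := by
        by_contra hne
        have hz : a 1 = 0 := by have := h1 1; omega
        rw [hz] at h3
        have : (a 0 : ℝ) ≤ 1 := by exact_mod_cast h1 0
        push_cast at h3
        linarith [phi_gt_one]
      rw [ha1] at h3
      have ha0 : a 0 = 0 := by
        have : (a 0:ℝ) = 0 := by push_cast at h3; linarith
        exact_mod_cast this
      refine ⟨0, le_refl _, ?_⟩
      funext i
      unfold repFun
      push_cast
      split_ifs with hc
      · have hi : i = 1 := by omega
        rw [hi, ha1]
      · rcases eq_or_ne i 0 with rfl | hne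
        · rw [ha0]
        · exact (h2 i (by omega)).symm
    · rintro ⟨k, hk, rfl⟩
      have hk0 : k = 0 := by omega
      subst hk0
      refine ⟨repFun_le _ _, fun i hi => ?_, ?_⟩
      · unfold repFun
        push_cast at hi ⊢
        rw [if_neg (by omega)]
      · rw [show ((1:ℕ):ℤ) = 1 by norm_num, hsum, zpow_one]
        have h0 : repFun 1 0 0 = 0 := by unfold repFun; rw [if_neg (by omega)]
        have h1' : repFun 1 0 1 = 1 := by unfold repFun; rw [if_pos (by omega)]
        rw [h0, h1']; norm_num
  | (s+2), ih =>
    have hA := ih s (by omega)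
    have hcast : ((s+2:ℕ):ℤ) = (s:ℤ)+2 := by push_cast; ring
    have hsplit : Finset.Icc (0:ℤ) ((s:ℤ)+2)
        = insert ((s:ℤ)+2) (insert ((s:ℤ)+1) (Finset.Icc 0 (s:ℤ))) :=
      Icc_split2 _ (by positivity)
    ext a
    simp only [ASet, Set.mem_setOf_eq, Set.mem_image, Set.mem_Iic]
    constructor
    · rintro ⟨h1, h2, h3⟩
      rw [hcast, hsplit, Finset.sum_insert (nm1 _),
        Finset.sum_insert (notMem_Icc_succ _)] at h3
      rcases (by have := h1 ((s:ℤ)+2); omega :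
          a ((s:ℤ)+2) = 0 ∨ a ((s:ℤ)+2) = 1) with h0 | h0
      · -- top digit 0: next digit must be 1, recurse
        have h4 : a ((s:ℤ)+1) = 1 := by
          by_contra hne
          have hz : a ((s:ℤ)+1) = 0 := by have := h1 ((s:ℤ)+1); omega
          rw [h0, hz] at h3
          push_cast at h3
          have hb := sum_bound a h1 s
          linarith [phi_pos]
        rw [h0, h4] at h3
        push_cast at h3
        have hS : ∑ i ∈ Finset.Icc (0:ℤ) (s:ℤ), (a i:ℝ) * goldenPhi ^ i
            = goldenPhi ^ (s:ℤ) := by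
          have := phi_step (s:ℤ)
          linarith
        have hb : (fun i => if i = (s:ℤ)+1 then 0 else a i) ∈ ASet s := by
          refine ⟨fun i => ?_, fun i hi => ?_, ?_⟩
          · dsimp only; split_ifs
            · omega
            · exact h1 i
          · dsimp only; split_ifs with he
            · rfl
            · rcases hi with hi | hi
              · exact h2 i (Or.inl hi)
              · rcases eq_or_ne i ((s:ℤ)+2) with rfl | hne2
                · exact h0
                · exact h2 i (Or.inr (by omega))
          · dsimp only
            rw [Finset.sum_congr rfl (fun i hi => ?_)]
            · exact hS
            · rw [if_neg (by simp only [Finset.mem_Icc] at hi; omega)]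
        rw [hA] at hb
        obtain ⟨k, hk, hbk⟩ := hb
        simp only [Set.mem_Iic] at hk
        refine ⟨k+1, by omega, ?_⟩
        funext i
        rcases eq_or_ne i ((s:ℤ)+2) with rfl | hi2
        · have : repFun (s+2) (k+1) ((s:ℤ)+2) = 0 := by
            unfold repFun; push_cast; rw [if_neg (by omega)]
          rw [this, h0]
        · rcases eq_or_ne i ((s:ℤ)+1) with rfl | hi1
          · have : repFun (s+2) (k+1) ((s:ℤ)+1) = 1 := by
              unfold repFun; push_cast; rw [if_pos (by omega)]
            rw [this, h4]
          · rw [repFun_step s k i hi1 hi2, congr_fun hbk i]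
            simp only [if_neg hi1]
      · -- top digit 1: everything else is 0
        rw [h0] at h3
        push_cast at h3
        have hSnn : (0:ℝ) ≤ ∑ i ∈ Finset.Icc (0:ℤ) (s:ℤ), (a i:ℝ) * goldenPhi ^ i :=
          Finset.sum_nonneg fun i _ => term_nonneg a i
        have htnn : (0:ℝ) ≤ (a ((s:ℤ)+1):ℝ) * goldenPhi ^ ((s:ℤ)+1) := term_nonneg a _
        have ht0 : (a ((s:ℤ)+1):ℝ) * goldenPhi ^ ((s:ℤ)+1) = 0 := by linarith
        have hS0 : ∑ i ∈ Finset.Icc (0:ℤ) (s:ℤ), (a i:ℝ) * goldenPhi ^ i = 0 := by linarith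
        have ha1 : a ((s:ℤ)+1) = 0 := by
          rcases mul_eq_zero.mp ht0 with h | h
          · exact_mod_cast h
          · exact absurd h (ne_of_gt (phi_zpow_pos _))
        have hall : ∀ i ∈ Finset.Icc (0:ℤ) (s:ℤ), a i = 0 := by
          intro i hi
          have := (Finset.sum_eq_zero_iff_of_nonneg
            (fun i _ => term_nonneg a i)).mp hS0 i hi
          rcases mul_eq_zero.mp this with h | h
          · exact_mod_cast h
          · exact absurd h (ne_of_gt (phi_zpow_pos _))
        refine ⟨0, by omega, ?_⟩
        funext i
        unfold repFun
        push_cast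
        split_ifs with hc
        · have hi : i = (s:ℤ)+2 := by omega
          rw [hi, h0]
        · rcases eq_or_ne i ((s:ℤ)+1) with rfl | hi1
          · rw [ha1]
          · by_cases hi0 : 0 ≤ i ∧ i ≤ (s:ℤ)
            · exact (hall i (Finset.mem_Icc.mpr hi0)).symm
            · exact (h2 i (by omega)).symm
    · rintro ⟨k, hk, rfl⟩
      match k, hk with
      | 0, hk =>
        refine ⟨repFun_le _ _, fun i hi => ?_, ?_⟩
        · unfold repFun
          push_cast at hi ⊢
          rw [if_neg (by omega)]
        · rw [hcast, hsplit, Finset.sum_insert (nm1 _),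
            Finset.sum_insert (notMem_Icc_succ _)]
          have v2 : repFun (s+2) 0 ((s:ℤ)+2) = 1 := by
            unfold repFun; push_cast; rw [if_pos (by omega)]
          have v1 : repFun (s+2) 0 ((s:ℤ)+1) = 0 := by
            unfold repFun; push_cast; rw [if_neg (by omega)]
          have v0 : ∀ i ∈ Finset.Icc (0:ℤ) (s:ℤ), (repFun (s+2) 0 i:ℝ) * goldenPhi ^ i = 0 := by
            intro i hi
            simp only [Finset.mem_Icc] at hi
            have : repFun (s+2) 0 i = 0 := by
              unfold repFun; push_cast; rw [if_neg (by omega)]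
            rw [this]; norm_num
          rw [v2, v1, Finset.sum_eq_zero v0]
          norm_num
      | (k'+1), hk =>
        have hk' : k' ≤ s/2 := by omega
        have hmem : repFun s k' ∈ ASet s := by
          rw [hA]; exact ⟨k', Set.mem_Iic.mpr hk', rfl⟩
        obtain ⟨g1, g2, g3⟩ := hmem
        refine ⟨repFun_le _ _, fun i hi => ?_, ?_⟩
        · unfold repFun
          push_cast at hi ⊢
          rw [if_neg (by omega)]
        · rw [hcast, hsplit, Finset.sum_insert (nm1 _),
            Finset.sum_insert (notMem_Icc_succ _)]
          have v2 : repFun (s+2) (k'+1) ((s:ℤ)+2) = 0 := by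
            unfold repFun; push_cast; rw [if_neg (by omega)]
          have v1 : repFun (s+2) (k'+1) ((s:ℤ)+1) = 1 := by
            unfold repFun; push_cast; rw [if_pos (by omega)]
          have hinner : ∑ i ∈ Finset.Icc (0:ℤ) (s:ℤ), (repFun (s+2) (k'+1) i:ℝ) * goldenPhi ^ i
              = goldenPhi ^ (s:ℤ) := by
            rw [Finset.sum_congr rfl (fun i hi => ?_)]
            · exact g3
            · simp only [Finset.mem_Icc] at hi
              rw [repFun_step s k' i (by omega) (by omega)]
          rw [v2, v1, hinner]
          push_cast
          have := phi_step (s:ℤ)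
          linarith

/-- The number of 0-1 digit functions supported on `[0, s]` representing
`φ^s` as `∑_{i=0}^{s} a(i)·φ^i` is `⌊s/2⌋ + 1`. -/
theorem card_reps_of_phi_pow (s : ℕ) (A : Set (ℤ → ℕ))
    (hA : A = {a : ℤ → ℕ | (∀ i, a i ≤ 1) ∧
      (∀ i : ℤ, i < 0 ∨ (s : ℤ) < i → a i = 0) ∧
      ∑ i ∈ Finset.Icc (0 : ℤ) (s : ℤ), (a i : ℝ) * goldenPhi ^ i = goldenPhi ^ (s : ℤ)}) :
    A.Finite ∧ A.ncard = s / 2 + 1 := by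
  have hA' : A = repFun s '' Set.Iic (s/2) := hA.trans (key_s19 s)
  rw [hA']
  constructor
  · exact (Set.finite_Iic _).image _
  · rw [Set.ncard_image_of_injective _ (repFun_injective s)]
    rw [← Finset.coe_Iic, Set.ncard_coe_finset, Nat.card_Iic]
end
end
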